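/- arXiv:1108.6015 — 6 statements merged into one kernel-verified Lean document; each statement's English description precedes it below -/
import Mathlib

section
/- For all n ≥ 1 and k ≥ 1, the number F(n,k) of rooted semilabeled trees with n non-root vertices and k labeled leaves satisfies F(n,k) = S(n, n-k+1), where S denotes the Stirling number of the second kind. -/
open Finset Polynomial

/-- Stirling number of the second kind. -/
noncomputable def Stirling (n k : ℕ) : ℕ :=
  Set.ncard {P : Finpartition (Finset.univ : Finset (Fin n)) | P.parts.card = k}

noncomputable def Bell (n : ℕ) : ℕ :=
  Set.ncard (Set.univ : Set (Finpartition (Finset.univ : Finset (Fin n))))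

noncomputable def SStar (n k : ℕ) : ℕ :=
  Set.ncard {P : Finpartition (Finset.univ : Finset (Fin n)) |
    P.parts.card = k ∧ ∀ p ∈ P.parts, 2 ≤ p.card}

noncomputable def BellStar (n : ℕ) : ℕ :=
  Set.ncard {P : Finpartition (Finset.univ : Finset (Fin n)) |
    ∀ p ∈ P.parts, 2 ≤ p.card}

structure SemiTree (n k : ℕ) where
  par : Fin (n + 1) → Fin (n + 1)
  rootFix : par (Fin.last n) = Fin.last n
  reach : ∀ v : Fin (n + 1), ∃ m : ℕ, par^[m] v = Fin.last n
  label : Fin k → Fin n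
  labelInj : Function.Injective label
  labelIsLeaf : ∀ i : Fin k, ∀ w : Fin (n + 1), w ≠ Fin.last n →
    par w ≠ (label i).castSucc
  leafIsLabeled : ∀ v : Fin n,
    (∀ w : Fin (n + 1), w ≠ Fin.last n → par w ≠ v.castSucc) → ∃ i, label i = v

/-- Isomorphism of rooted semilabeled trees: a root- and label-preserving
graph isomorphism. -/
def semiTreeIso {n k : ℕ} (T T' : SemiTree n k) : Prop :=
  ∃ σ : Fin (n + 1) ≃ Fin (n + 1), σ (Fin.last n) = Fin.last n ∧
    (∀ v, σ (T.par v) = T'.par (σ v)) ∧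
    (∀ i, σ ((T.label i).castSucc) = (T'.label i).castSucc)

/-- `Fcount n k` : the number of rooted semilabeled trees with `n` non-root vertices and
`k` labeled leaves, i.e. the number of isomorphism classes. -/
noncomputable def Fcount (n k : ℕ) : ℕ :=
  Set.ncard (Set.univ : Set (Quot (@semiTreeIso n k)))

/-- A phylogenetic tree with `n` labeled leaves and `k` unlabeled internal vertices
(one of which is the root).  The vertices `v` with `v.val < n` are the leaves,
labeled by their own index; the remaining `k` vertices are internal. -/
structure PhyloTree (n k : ℕ) where
  par : Fin (n + k) → Fin (n + k)
  root : Fin (n + k)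
  rootInternal : n ≤ root.val
  rootFix : par root = root
  reach : ∀ v : Fin (n + k), ∃ m : ℕ, par^[m] v = root
  leafNoChild : ∀ v w : Fin (n + k), v.val < n → w ≠ root → par w ≠ v
  branching : ∀ v : Fin (n + k), n ≤ v.val →
    2 ≤ (Finset.univ.filter (fun w => w ≠ root ∧ par w = v)).card

/-- Isomorphism of phylogenetic trees: a root-preserving graph isomorphism fixing
every labeled leaf. -/
def phyloTreeIso {n k : ℕ} (T T' : PhyloTree n k) : Prop :=
  ∃ σ : Fin (n + k) ≃ Fin (n + k), σ T.root = T'.root ∧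
    (∀ v : Fin (n + k), v.val < n → σ v = v) ∧
    (∀ v, σ (T.par v) = T'.par (σ v))

/-- `Tcount n k` : the number of phylogenetic trees with `n` labeled leaves and `k`
unlabeled internal vertices, i.e. the number of isomorphism classes. -/
noncomputable def Tcount (n k : ℕ) : ℕ :=
  Set.ncard (Set.univ : Set (Quot (@phyloTreeIso n k)))


/-!
Grouping the non-root vertices by their parent partitions `Fin n` into one class per internal
vertex, that is into `n + 1 - k` classes. To make this an invariant of the isomorphism class,
the vertices are first renamed by increasing value of an injective invariant `code`, which puts
the leaves first, in the order of their labels, and otherwise compares vertices through their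
largest child. In the renamed tree every vertex precedes its parent and the internal vertices
come in the order of their largest children. Conversely, listing the blocks of a partition by
their largest element and hanging them in this order below the vertices `k, …, n` builds the
unique such canonical tree with these sibling classes. Isomorphic canonical trees are equal: an
isomorphism between them fixes the vertices one by one, from the leaves up.
-/

namespace SemiTree

variable {n k : ℕ}

theorem ext {X Y : SemiTree n k} (hpar : X.par = Y.par) (hlabel : X.label = Y.label) : X = Y := by
  cases X; cases Y; cases hpar; cases hlabel; rfl

def children (T : SemiTree n k) (v : Fin (n + 1)) : Finset (Fin n) :=
  {y | T.par y.castSucc = v}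

@[simp]
theorem mem_children {T : SemiTree n k} {v : Fin (n + 1)} {y : Fin n} :
    y ∈ T.children v ↔ T.par y.castSucc = v := by
  simp [children]

theorem children_last_nonempty (T : SemiTree n k) (hn : 1 ≤ n) :
    (T.children (Fin.last n)).Nonempty := by
  by_contra h
  simp only [not_nonempty_iff_eq_empty, eq_empty_iff_forall_notMem, mem_children] at h
  -- if no vertex had the root as parent, no non-root vertex could ever reach it
  have avoid : ∀ m, T.par^[m] (Fin.castSucc ⟨0, hn⟩) ≠ Fin.last n := by
    intro m
    induction m with
    | zero => exact Fin.castSucc_ne_last _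
    | succ m ih =>
      rw [Function.iterate_succ_apply']
      obtain ⟨y, hy⟩ := Fin.exists_castSucc_eq.2 ih
      exact hy ▸ h y
  obtain ⟨m, hm⟩ := T.reach (Fin.castSucc ⟨0, hn⟩)
  exact avoid m hm

theorem children_eq_empty_iff (T : SemiTree n k) (hn : 1 ≤ n) {v : Fin (n + 1)} :
    T.children v = ∅ ↔ ∃ i, (T.label i).castSucc = v := by
  constructor
  · intro h
    obtain ⟨u, rfl⟩ : ∃ u : Fin n, u.castSucc = v := by
      refine Fin.exists_castSucc_eq.2 fun hv => ?_
      exact (T.children_last_nonempty hn).ne_empty (hv ▸ h)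
    obtain ⟨i, hi⟩ := T.leafIsLabeled u fun w hw hpar => by
      obtain ⟨y, rfl⟩ := Fin.exists_castSucc_eq.2 hw
      simpa [h] using (mem_children.2 hpar : y ∈ T.children u.castSucc)
    exact ⟨i, hi ▸ rfl⟩
  · rintro ⟨i, rfl⟩
    exact eq_empty_of_forall_notMem fun y hy =>
      T.labelIsLeaf i _ (Fin.castSucc_ne_last y) (mem_children.1 hy)

noncomputable def depth (T : SemiTree n k) (v : Fin (n + 1)) : ℕ := Nat.find (T.reach v)

theorem depth_par_lt (T : SemiTree n k) {v : Fin (n + 1)} (hv : v ≠ Fin.last n) :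
    T.depth (T.par v) < T.depth v := by
  have hpos : 0 < T.depth v := Nat.pos_of_ne_zero fun h => hv ((Nat.find_eq_zero _).1 h)
  have : T.par^[T.depth v - 1] (T.par v) = Fin.last n := by
    rw [← Function.iterate_succ_apply, Nat.succ_eq_add_one, Nat.sub_add_cancel hpos]
    exact Nat.find_spec (T.reach v)
  exact lt_of_le_of_lt (Nat.find_le this) (Nat.sub_lt hpos one_pos)

/-- An isomorphism invariant separating the vertices (`code_injective`); the shift by `k + 1`
puts every internal vertex above every leaf. -/
noncomputable def code (T : SemiTree n k) (v : Fin (n + 1)) : ℕ :=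
  if h : ∃ i, (T.label i).castSucc = v then h.choose.val + 1
  else (T.children v).attach.sup (fun y => T.code y.1.castSucc) + (k + 1)
termination_by univ.sup T.depth - T.depth v
decreasing_by
  have hlt := T.depth_par_lt (Fin.castSucc_ne_last y.1)
  rw [mem_children.1 y.2] at hlt
  have hle := le_sup (f := T.depth) (mem_univ y.1.castSucc)
  omega

theorem code_label (T : SemiTree n k) (i : Fin k) :
    T.code (T.label i).castSucc = i.val + 1 := by
  have h : ∃ j, (T.label j).castSucc = (T.label i).castSucc := ⟨i, rfl⟩
  rw [code, dif_pos h, T.labelInj (Fin.castSucc_injective _ h.choose_spec)]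

theorem code_of_not_label (T : SemiTree n k) {v : Fin (n + 1)}
    (hv : ¬ ∃ i, (T.label i).castSucc = v) :
    T.code v = (T.children v).attach.sup (fun y => T.code y.1.castSucc) + (k + 1) := by
  rw [code, dif_neg hv]

theorem not_label_of_children_nonempty (T : SemiTree n k) {v : Fin (n + 1)}
    (hv : (T.children v).Nonempty) : ¬ ∃ i, (T.label i).castSucc = v := by
  rintro ⟨i, rfl⟩
  obtain ⟨y, hy⟩ := hv
  exact T.labelIsLeaf i _ (Fin.castSucc_ne_last y) (mem_children.1 hy)

theorem code_add_le_code (T : SemiTree n k) {v : Fin (n + 1)} {y : Fin n}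
    (hy : y ∈ T.children v) : T.code y.castSucc + (k + 1) ≤ T.code v := by
  rw [T.code_of_not_label (T.not_label_of_children_nonempty ⟨y, hy⟩)]
  exact Nat.add_le_add_right (le_sup (f := fun y : T.children v => T.code y.1.castSucc)
    (mem_attach _ ⟨y, hy⟩)) _

theorem exists_code_eq (T : SemiTree n k) {v : Fin (n + 1)} (hv : (T.children v).Nonempty) :
    ∃ y ∈ T.children v, T.code v = T.code y.castSucc + (k + 1) := by
  obtain ⟨y, -, hy⟩ := exists_mem_eq_sup _ (attach_nonempty_iff.2 hv)
    (fun y : T.children v => T.code y.1.castSucc)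
  exact ⟨y.1, y.2, by rw [T.code_of_not_label (T.not_label_of_children_nonempty hv), hy]⟩

theorem code_le_iff (T : SemiTree n k) (hn : 1 ≤ n) {v : Fin (n + 1)} :
    T.code v ≤ k ↔ T.children v = ∅ := by
  rw [T.children_eq_empty_iff hn]
  constructor
  · intro hv
    by_contra h
    rw [T.code_of_not_label h] at hv
    omega
  · rintro ⟨i, rfl⟩
    rw [code_label]
    exact i.isLt

theorem code_injective (T : SemiTree n k) (hn : 1 ≤ n) : Function.Injective T.code := by
  suffices ∀ N v w, T.code v = N → T.code v = T.code w → v = w from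
    fun v w h => this _ v w rfl h
  intro N
  induction N using Nat.strong_induction_on with
  | _ N ih =>
  intro v w hN hvw
  by_cases hv : (T.children v).Nonempty <;> by_cases hw : (T.children w).Nonempty
  · obtain ⟨y, hy, hvy⟩ := T.exists_code_eq hv
    obtain ⟨z, hz, hwz⟩ := T.exists_code_eq hw
    have hyz := ih _ (by omega) y.castSucc z.castSucc rfl (by omega)
    rw [← mem_children.1 hy, ← mem_children.1 hz, hyz]
  · have := (T.code_le_iff hn).2 (not_nonempty_iff_eq_empty.1 hw)
    obtain ⟨y, hy, _⟩ := T.exists_code_eq hv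
    omega
  · have := (T.code_le_iff hn).2 (not_nonempty_iff_eq_empty.1 hv)
    obtain ⟨z, hz, _⟩ := T.exists_code_eq hw
    omega
  · obtain ⟨i, rfl⟩ := (T.children_eq_empty_iff hn).1 (not_nonempty_iff_eq_empty.1 hv)
    obtain ⟨j, rfl⟩ := (T.children_eq_empty_iff hn).1 (not_nonempty_iff_eq_empty.1 hw)
    rw [code_label, code_label] at hvw
    rw [Fin.ext (by omega : i.val = j.val)]

theorem code_lt_code_par (T : SemiTree n k) {v : Fin (n + 1)} (hv : v ≠ Fin.last n) :
    T.code v < T.code (T.par v) := by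
  have := T.code_add_le_code (mem_children.2 (congrArg T.par (Fin.castSucc_castPred v hv)))
  rw [Fin.castSucc_castPred] at this
  omega

theorem code_lt_code_last (T : SemiTree n k) {v : Fin (n + 1)} (hv : v ≠ Fin.last n) :
    T.code v < T.code (Fin.last n) := by
  obtain ⟨m, hm⟩ := T.reach v
  induction m generalizing v with
  | zero => exact absurd hm hv
  | succ m ih =>
    rw [Function.iterate_succ_apply] at hm
    by_cases hp : T.par v = Fin.last n
    · exact hp ▸ T.code_lt_code_par hv
    · exact (T.code_lt_code_par hv).trans (ih hp hm)

end SemiTree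

theorem Finset.card_filter_lt_lt_iff {α β : Type*} [LinearOrder β] {s : Finset α} (f : α → β)
    {a b : α} (ha : a ∈ s) : #{c ∈ s | f c < f a} < #{c ∈ s | f c < f b} ↔ f a < f b := by
  constructor
  · intro h
    by_contra hba
    push Not at hba
    refine h.not_ge (card_le_card fun c => ?_)
    simp only [mem_filter]
    exact And.imp_right fun hc => hc.trans_le hba
  · intro hab
    refine card_lt_card ((ssubset_iff_of_subset fun c => ?_).2 ⟨a, ?_, ?_⟩)
    · simp only [mem_filter]
      exact And.imp_right fun hc => hc.trans hab
    · simpa [ha]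
    · simp

section RankEquiv

variable {m : ℕ} (f : Fin m → ℕ)

noncomputable def rankEquiv (hf : Function.Injective f) : Fin m ≃ Fin m :=
  Equiv.ofBijective
    (fun a => ⟨#{c | f c < f a},
      by simpa using card_lt_card (filter_ssubset.2 ⟨a, mem_univ a, lt_irrefl (f a)⟩)⟩)
    (Finite.injective_iff_bijective.1 fun a b hab => hf <| by
      have hab : #{c | f c < f a} = #{c | f c < f b} := congrArg Fin.val hab
      have h₁ := (card_filter_lt_lt_iff f (mem_univ a) (b := b)).not
      have h₂ := (card_filter_lt_lt_iff f (mem_univ b) (b := a)).not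
      omega)

theorem rankEquiv_val (hf : Function.Injective f) (a : Fin m) :
    (rankEquiv f hf a).val = #{c | f c < f a} := rfl

theorem rankEquiv_lt_rankEquiv_iff (hf : Function.Injective f) {a b : Fin m} :
    rankEquiv f hf a < rankEquiv f hf b ↔ f a < f b :=
  card_filter_lt_lt_iff f (mem_univ a)

end RankEquiv

namespace SemiTree

variable {n k : ℕ}

structure IsIso (X Y : SemiTree n k) (σ : Fin (n + 1) ≃ Fin (n + 1)) : Prop where
  map_last : σ (Fin.last n) = Fin.last n
  map_par : ∀ v, σ (X.par v) = Y.par (σ v)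
  map_label : ∀ i, σ (X.label i).castSucc = (Y.label i).castSucc

theorem semiTreeIso_iff {X Y : SemiTree n k} : semiTreeIso X Y ↔ ∃ σ, IsIso X Y σ :=
  ⟨fun ⟨σ, h₁, h₂, h₃⟩ => ⟨σ, h₁, h₂, h₃⟩, fun ⟨σ, h⟩ => ⟨σ, h.1, h.2, h.3⟩⟩

namespace IsIso

variable {X Y Z : SemiTree n k} {σ τ : Fin (n + 1) ≃ Fin (n + 1)}

theorem refl (X : SemiTree n k) : IsIso X X (Equiv.refl _) :=
  ⟨rfl, fun _ => rfl, fun _ => rfl⟩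

theorem symm (hσ : IsIso X Y σ) : IsIso Y X σ.symm where
  map_last := σ.symm_apply_eq.2 hσ.map_last.symm
  map_par v := σ.injective (by rw [σ.apply_symm_apply, hσ.map_par, σ.apply_symm_apply])
  map_label i := σ.injective (by rw [σ.apply_symm_apply, hσ.map_label])

theorem trans (hσ : IsIso X Y σ) (hτ : IsIso Y Z τ) : IsIso X Z (σ.trans τ) where
  map_last := by simp [hσ.map_last, hτ.map_last]
  map_par v := by simp [hσ.map_par, hτ.map_par]
  map_label i := by simp [hσ.map_label, hτ.map_label]

theorem apply_ne_last (hσ : IsIso X Y σ) {v : Fin (n + 1)} (hv : v ≠ Fin.last n) :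
    σ v ≠ Fin.last n :=
  fun h => hv (σ.injective (h.trans hσ.map_last.symm))

theorem mem_children_iff (hσ : IsIso X Y σ) {v : Fin (n + 1)} {y : Fin n} :
    y ∈ Y.children (σ v) ↔ ∃ x ∈ X.children v, σ x.castSucc = y.castSucc := by
  constructor
  · intro hy
    have hx : σ.symm y.castSucc ≠ Fin.last n := hσ.symm.apply_ne_last (Fin.castSucc_ne_last y)
    refine ⟨(σ.symm y.castSucc).castPred hx, mem_children.2 (σ.injective ?_), by simp⟩
    rw [Fin.castSucc_castPred, hσ.map_par, σ.apply_symm_apply, mem_children.1 hy]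
  · rintro ⟨x, hx, hxy⟩
    rw [mem_children, ← hxy, ← hσ.map_par, mem_children.1 hx]

end IsIso

theorem semiTreeIso_equivalence : Equivalence (@semiTreeIso n k) where
  refl X := semiTreeIso_iff.2 ⟨_, IsIso.refl X⟩
  symm h := by
    obtain ⟨σ, hσ⟩ := semiTreeIso_iff.1 h
    exact semiTreeIso_iff.2 ⟨_, hσ.symm⟩
  trans h₁ h₂ := by
    obtain ⟨σ, hσ⟩ := semiTreeIso_iff.1 h₁
    obtain ⟨τ, hτ⟩ := semiTreeIso_iff.1 h₂
    exact semiTreeIso_iff.2 ⟨_, hσ.trans hτ⟩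

def relabel (T : SemiTree n k) (σ : Fin (n + 1) ≃ Fin (n + 1))
    (hσ : σ (Fin.last n) = Fin.last n) : SemiTree n k where
  par w := σ (T.par (σ.symm w))
  rootFix := by rw [σ.symm_apply_eq.2 hσ.symm, T.rootFix, hσ]
  reach w := by
    obtain ⟨m, hm⟩ := T.reach (σ.symm w)
    have hconj : Function.Semiconj σ T.par (fun w => σ (T.par (σ.symm w))) := fun x => by simp
    exact ⟨m, by rw [← σ.apply_symm_apply w, ← hconj.iterate_right m, hm, hσ]⟩
  label i := (σ (T.label i).castSucc).castPred
    fun h => Fin.castSucc_ne_last _ (σ.injective (h.trans hσ.symm))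
  labelInj i j h := T.labelInj (Fin.castSucc_injective _ (σ.injective (by
    simpa using congrArg Fin.castSucc h)))
  labelIsLeaf i w hw h := by
    refine T.labelIsLeaf i (σ.symm w) (fun h' => hw ?_) (σ.injective (by simpa using h))
    rw [← σ.apply_symm_apply w, h', hσ]
  leafIsLabeled v h := by
    have hu : σ.symm v.castSucc ≠ Fin.last n := fun h' =>
      Fin.castSucc_ne_last v (by rw [← σ.apply_symm_apply v.castSucc, h', hσ])
    obtain ⟨i, hi⟩ := T.leafIsLabeled ((σ.symm v.castSucc).castPred hu) fun w hw hpar =>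
      h (σ w) (fun h' => hw (σ.injective (h'.trans hσ.symm))) (by simp [hpar])
    exact ⟨i, by simp [hi]⟩

theorem isIso_relabel (T : SemiTree n k) (σ : Fin (n + 1) ≃ Fin (n + 1))
    (hσ : σ (Fin.last n) = Fin.last n) : IsIso T (T.relabel σ hσ) σ where
  map_last := hσ
  map_par v := by simp [relabel]
  map_label i := by simp [relabel]

noncomputable def canonicalOrder (T : SemiTree n k) (hn : 1 ≤ n) : Fin (n + 1) ≃ Fin (n + 1) :=
  rankEquiv T.code (T.code_injective hn)

theorem canonicalOrder_lt_iff (T : SemiTree n k) (hn : 1 ≤ n) {v w : Fin (n + 1)} :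
    T.canonicalOrder hn v < T.canonicalOrder hn w ↔ T.code v < T.code w :=
  rankEquiv_lt_rankEquiv_iff _ _

theorem canonicalOrder_last (T : SemiTree n k) (hn : 1 ≤ n) :
    T.canonicalOrder hn (Fin.last n) = Fin.last n := by
  have h : ({w | T.code w < T.code (Fin.last n)} : Finset (Fin (n + 1))) =
      univ.erase (Fin.last n) := by
    ext w
    simp only [mem_filter_univ, mem_erase, mem_univ, and_true]
    exact ⟨fun h hw => (hw ▸ h).false, T.code_lt_code_last⟩
  exact Fin.ext (by simp [canonicalOrder, rankEquiv_val, h])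

theorem canonicalOrder_label (T : SemiTree n k) (hn : 1 ≤ n) (i : Fin k) :
    (T.canonicalOrder hn (T.label i).castSucc).val = i.val := by
  have h : ({w | T.code w < T.code (T.label i).castSucc} : Finset (Fin (n + 1))) =
      (Iio i).map ⟨fun j => (T.label j).castSucc, (Fin.castSucc_injective _).comp T.labelInj⟩ := by
    ext w
    simp only [mem_filter_univ, mem_map, mem_Iio, Function.Embedding.coeFn_mk, code_label]
    constructor
    · intro hw
      have hleaf := (T.code_le_iff hn (v := w)).1 (by omega)
      obtain ⟨j, rfl⟩ := (T.children_eq_empty_iff hn).1 hleaf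
      exact ⟨j, by rw [code_label] at hw; exact Fin.lt_def.2 (by omega), rfl⟩
    · rintro ⟨j, hj, rfl⟩
      rw [code_label]
      exact Nat.add_lt_add_right hj 1
  rw [canonicalOrder, rankEquiv_val, h, card_map, Fin.card_Iio]

noncomputable def canonicalForm (T : SemiTree n k) (hn : 1 ≤ n) : SemiTree n k :=
  T.relabel (T.canonicalOrder hn) (T.canonicalOrder_last hn)

end SemiTree

theorem Equiv.le_apply_of_forall_lt_apply_eq {α : Type*} [LinearOrder α] (σ : α ≃ α) {v : α}
    (h : ∀ u < v, σ u = u) : v ≤ σ v := by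
  by_contra hv
  push Not at hv
  exact hv.ne (σ.injective (h _ hv))

/-- The largest element, as a natural number; `0` for the empty set. -/
def maxVal {n : ℕ} (s : Finset (Fin n)) : ℕ := s.sup Fin.val

theorem maxVal_lt_maxVal {n : ℕ} {s t : Finset (Fin n)} (hs : s.Nonempty) {y : Fin n}
    (hy : y ∈ t) (h : ∀ x ∈ s, x < y) : maxVal s < maxVal t := by
  obtain ⟨x, hx⟩ := hs
  have hy₀ : ⊥ < y.val := lt_of_le_of_lt (Nat.zero_le x.val) (h x hx)
  exact ((Finset.sup_lt_iff hy₀).2 h).trans_le (le_sup hy)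

namespace SemiTree

variable {n k : ℕ}

structure IsCanonical (X : SemiTree n k) : Prop where
  label_val : ∀ i, (X.label i).val = i.val
  castSucc_lt_par : ∀ y : Fin n, y.castSucc < X.par y.castSucc
  maxVal_lt : ∀ v w, (X.children v).Nonempty → (X.children w).Nonempty → v < w →
    maxVal (X.children v) < maxVal (X.children w)

theorem IsCanonical.children_nonempty_iff {X : SemiTree n k} (hX : X.IsCanonical) (hn : 1 ≤ n)
    {v : Fin (n + 1)} : (X.children v).Nonempty ↔ k ≤ v.val := by
  rw [nonempty_iff_ne_empty, Ne, X.children_eq_empty_iff hn]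
  constructor
  · intro h
    by_contra hv
    exact h ⟨⟨v, by omega⟩, Fin.ext (hX.label_val _)⟩
  · rintro hv ⟨i, rfl⟩
    rw [Fin.val_castSucc, hX.label_val] at hv
    omega

theorem IsIso.children_eq {X Y : SemiTree n k} {σ : Fin (n + 1) ≃ Fin (n + 1)}
    (hσ : IsIso X Y σ) (hX : ∀ y : Fin n, y.castSucc < X.par y.castSucc) {v : Fin (n + 1)}
    (hfix : ∀ u < v, σ u = u) : Y.children (σ v) = X.children v := by
  ext y
  rw [hσ.mem_children_iff]
  constructor
  · rintro ⟨x, hx, hxy⟩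
    rw [hfix _ (mem_children.1 hx ▸ hX x)] at hxy
    exact Fin.castSucc_injective _ hxy ▸ hx
  · intro hy
    exact ⟨y, hy, hfix _ (mem_children.1 hy ▸ hX y)⟩

theorem IsCanonical.eq_of_isIso {X Y : SemiTree n k} {σ : Fin (n + 1) ≃ Fin (n + 1)}
    (hn : 1 ≤ n) (hX : X.IsCanonical) (hY : Y.IsCanonical) (hσ : IsIso X Y σ) : X = Y := by
  have hfix : ∀ v, σ v = v := by
    intro v
    induction v using WellFoundedLT.induction with
    | _ v ih =>
    have ih' : ∀ u < v, σ.symm u = u := fun u hu => σ.symm_apply_eq.2 (ih u hu).symm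
    by_cases hv : k ≤ v.val
    · -- otherwise `v`, `σ v` and `σ⁻¹ v` are internal with `v < σ v` and `v < σ⁻¹ v`, and
      -- the children of `σ v` in `Y` and of `σ⁻¹ v` in `X` are those of `v` in `X` and `Y`:
      -- comparing largest children in `X` and in `Y` gives opposite inequalities
      by_contra hne
      have hw : v < σ v := (σ.le_apply_of_forall_lt_apply_eq ih).lt_of_ne (Ne.symm hne)
      have hu : v < σ.symm v := (σ.symm.le_apply_of_forall_lt_apply_eq ih').lt_of_ne
        fun h => hne (σ.symm_apply_eq.1 h.symm).symm
      have h₁ := hX.maxVal_lt v (σ.symm v) ((hX.children_nonempty_iff hn).2 hv)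
        ((hX.children_nonempty_iff hn).2 (hv.trans (Fin.lt_def.1 hu).le)) hu
      have h₂ := hY.maxVal_lt v (σ v) ((hY.children_nonempty_iff hn).2 hv)
        ((hY.children_nonempty_iff hn).2 (hv.trans (Fin.lt_def.1 hw).le)) hw
      rw [hσ.symm.children_eq hY.castSucc_lt_par ih'] at h₁
      rw [hσ.children_eq hX.castSucc_lt_par ih] at h₂
      omega
    · push Not at hv
      calc σ v = σ (X.label ⟨v, hv⟩).castSucc :=
            congrArg σ (Fin.ext (hX.label_val ⟨v, hv⟩)).symm
        _ = (Y.label ⟨v, hv⟩).castSucc := hσ.map_label _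
        _ = v := Fin.ext (hY.label_val _)
  exact ext (funext fun v => by simpa [hfix] using hσ.map_par v)
    (funext fun i => Fin.ext (by rw [hX.label_val, hY.label_val]))

theorem isCanonical_canonicalForm (T : SemiTree n k) (hn : 1 ≤ n) :
    (T.canonicalForm hn).IsCanonical := by
  have hσ : IsIso T (T.canonicalForm hn) (T.canonicalOrder hn) := T.isIso_relabel _ _
  refine ⟨fun i => ?_, fun y => ?_, fun v' w' hv' hw' hlt => ?_⟩
  · simpa [T.canonicalOrder_label hn] using congrArg Fin.val (hσ.map_label i).symm
  · have hx := hσ.symm.apply_ne_last (Fin.castSucc_ne_last y)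
    rw [← (T.canonicalOrder hn).apply_symm_apply y.castSucc, ← hσ.map_par]
    exact (T.canonicalOrder_lt_iff hn).2 (T.code_lt_code_par hx)
  · obtain ⟨v, rfl⟩ := (T.canonicalOrder hn).surjective v'
    obtain ⟨w, rfl⟩ := (T.canonicalOrder hn).surjective w'
    have hw : (T.children w).Nonempty := by
      obtain ⟨z, hz⟩ := hw'
      obtain ⟨x, hx, -⟩ := hσ.mem_children_iff.1 hz
      exact ⟨x, hx⟩
    -- the child of `w` of largest code lies above every child of `v`
    obtain ⟨c, hc, hcode⟩ := T.exists_code_eq hw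
    have hvw := (T.canonicalOrder_lt_iff hn).1 hlt
    have hc' := hσ.apply_ne_last (Fin.castSucc_ne_last c)
    refine maxVal_lt_maxVal hv'
      (hσ.mem_children_iff.2 ⟨c, hc, (Fin.castSucc_castPred _ hc').symm⟩) fun z hz => ?_
    obtain ⟨x, hx, hxz⟩ := hσ.mem_children_iff.1 hz
    rw [← Fin.castSucc_lt_castSucc_iff, Fin.castSucc_castPred, ← hxz, T.canonicalOrder_lt_iff hn]
    have := T.code_add_le_code hx
    omega

end SemiTree

theorem exists_iterate_eq_last_of_lt {n : ℕ} {f : Fin (n + 1) → Fin (n + 1)}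
    (hf : ∀ v, v ≠ Fin.last n → v < f v) (v : Fin (n + 1)) : ∃ m, f^[m] v = Fin.last n := by
  induction v using WellFoundedGT.induction with
  | _ v ih =>
  by_cases hv : v = Fin.last n
  · exact ⟨0, hv⟩
  · obtain ⟨m, hm⟩ := ih (f v) (hf v hv)
    exact ⟨m + 1, hm⟩

theorem Finpartition.mem_parts_iff_exists_part {α : Type*} [Fintype α] [DecidableEq α]
    (P : Finpartition (univ : Finset α)) {b : Finset α} : b ∈ P.parts ↔ ∃ y, P.part y = b :=
  ⟨fun hb => (P.part_surjOn hb).imp fun _ => And.right,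
    fun ⟨y, hy⟩ => hy ▸ P.part_mem.2 (mem_univ y)⟩

instance Setoid.decidableRelKer {α β : Type*} [DecidableEq β] (f : α → β) :
    DecidableRel (Setoid.ker f) :=
  fun _ _ => decidable_of_iff _ Setoid.ker_def.symm

section BlockVertex

variable {n : ℕ} (P : Finpartition (univ : Finset (Fin n)))

theorem maxVal_injOn_parts : Set.InjOn maxVal (P.parts : Set (Finset (Fin n))) := by
  intro b hb c hc h
  obtain ⟨y, hy, hby⟩ := exists_mem_eq_sup b (P.nonempty_of_mem_parts hb) Fin.val
  obtain ⟨z, hz, hcz⟩ := exists_mem_eq_sup c (P.nonempty_of_mem_parts hc) Fin.val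
  have hyz : y = z := Fin.ext (by rw [← hby, ← hcz]; exact h)
  exact P.eq_of_mem_parts hb hc hy (hyz ▸ hz)

/-- The vertex carrying block `b` as its set of children: blocks are listed by increasing
largest element and placed on the last `#P.parts` vertices, the root carrying the last one. -/
def blockVertex (b : Finset (Fin n)) : ℕ := n - #{c ∈ P.parts | maxVal b < maxVal c}

variable {P}

theorem blockVertex_lt_blockVertex_iff {b c : Finset (Fin n)} (hc : c ∈ P.parts) :
    blockVertex P b < blockVertex P c ↔ maxVal b < maxVal c := by
  have hcard : #{d ∈ P.parts | maxVal b < maxVal d} ≤ n :=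
    (card_filter_le _ _).trans (P.card_parts_le_card.trans_eq (card_fin n))
  have := card_filter_lt_lt_iff (s := P.parts) (fun d => OrderDual.toDual (maxVal d)) hc (b := b)
  simp only [OrderDual.toDual_lt_toDual] at this
  rw [blockVertex, blockVertex, ← this]
  omega

theorem blockVertex_injOn : Set.InjOn (blockVertex P) (P.parts : Set (Finset (Fin n))) := by
  intro b hb c hc h
  refine maxVal_injOn_parts P hb hc (le_antisymm ?_ ?_) <;> refine not_lt.1 fun hlt => ?_
  · exact (blockVertex_lt_blockVertex_iff hb).2 hlt |>.ne h.symm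
  · exact (blockVertex_lt_blockVertex_iff hc).2 hlt |>.ne h

theorem maxVal_lt_blockVertex {b : Finset (Fin n)} (hb : b ∈ P.parts) :
    maxVal b < blockVertex P b := by
  have hmax : ∀ c ∈ P.parts, maxVal c < n := fun c hc => by
    obtain ⟨y, hy⟩ := P.nonempty_of_mem_parts hc
    exact (Finset.sup_lt_iff (lt_of_le_of_lt (Nat.zero_le y.val) y.isLt)).2 fun z _ => z.isLt
  have hcard : #{c ∈ P.parts | maxVal b < maxVal c} ≤ #(Ioo (maxVal b) n) := by
    refine card_le_card_of_injOn maxVal (fun c hc => ?_) ((maxVal_injOn_parts P).mono ?_)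
    · simp only [coe_filter, Set.mem_ofPred_eq] at hc
      simpa using ⟨hc.2, hmax c hc.1⟩
    · simp only [coe_filter]
      exact fun c hc => hc.1
  rw [Nat.card_Ioo] at hcard
  have := hmax b hb
  rw [blockVertex]
  omega

theorem lt_blockVertex_part (y : Fin n) : y.val < blockVertex P (P.part y) :=
  (le_sup (P.mem_part (mem_univ y))).trans_lt (maxVal_lt_blockVertex (P.part_mem.2 (mem_univ y)))

theorem le_blockVertex {b : Finset (Fin n)} (hb : b ∈ P.parts) :
    n + 1 - #P.parts ≤ blockVertex P b := by
  have : #{c ∈ P.parts | maxVal b < maxVal c} < #P.parts :=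
    card_lt_card (filter_ssubset.2 ⟨b, hb, lt_irrefl _⟩)
  rw [blockVertex]
  omega

theorem image_blockVertex {k : ℕ} (hP : #P.parts = n + 1 - k) :
    P.parts.image (blockVertex P) = Icc k n := by
  refine eq_of_subset_of_card_le (fun x hx => ?_) ?_
  · obtain ⟨b, hb, rfl⟩ := mem_image.1 hx
    have := le_blockVertex hb
    have := card_pos.2 ⟨b, hb⟩
    exact mem_Icc.2 ⟨by omega, Nat.sub_le _ _⟩
  · rw [card_image_of_injOn blockVertex_injOn, Nat.card_Icc, hP]

end BlockVertex

namespace SemiTree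

variable {n k : ℕ} (P : Finpartition (univ : Finset (Fin n)))

def toTree (hP : #P.parts = n + 1 - k) (hkn : k ≤ n) : SemiTree n k where
  par := Fin.lastCases (Fin.last n)
    fun y => ⟨blockVertex P (P.part y), Nat.lt_succ_of_le (Nat.sub_le _ _)⟩
  rootFix := Fin.lastCases_last
  reach := exists_iterate_eq_last_of_lt fun v hv => by
    obtain ⟨y, rfl⟩ := Fin.exists_castSucc_eq.2 hv
    rw [Fin.lastCases_castSucc, Fin.lt_def, Fin.val_castSucc]
    exact lt_blockVertex_part y
  label i := ⟨i, i.isLt.trans_le hkn⟩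
  labelInj i j h := by simpa [Fin.ext_iff] using h
  labelIsLeaf i w hw h := by
    obtain ⟨y, rfl⟩ := Fin.exists_castSucc_eq.2 hw
    have hval : blockVertex P (P.part y) = i := by simpa using congrArg Fin.val h
    have := le_blockVertex (P.part_mem.2 (mem_univ y))
    omega
  leafIsLabeled v h := by
    by_cases hv : v.val < k
    · exact ⟨⟨v, hv⟩, rfl⟩
    · have hmem : v.val ∈ P.parts.image (blockVertex P) := by
        rw [image_blockVertex hP]
        exact mem_Icc.2 ⟨not_lt.1 hv, v.isLt.le⟩
      obtain ⟨b, hb, hbv⟩ := mem_image.1 hmem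
      obtain ⟨x, hx⟩ := P.nonempty_of_mem_parts hb
      refine absurd (Fin.ext ?_) (h x.castSucc (Fin.castSucc_ne_last x))
      simp [P.part_eq_of_mem hb hx, hbv]

variable {P} {hP : #P.parts = n + 1 - k} {hkn : k ≤ n}

theorem toTree_par_castSucc (y : Fin n) :
    ((toTree P hP hkn).par y.castSucc).val = blockVertex P (P.part y) := by
  simp [toTree]

theorem children_toTree_par (y : Fin n) :
    (toTree P hP hkn).children ((toTree P hP hkn).par y.castSucc) = P.part y := by
  ext z
  rw [mem_children, Fin.ext_iff, toTree_par_castSucc, toTree_par_castSucc,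
    blockVertex_injOn.eq_iff (P.part_mem.2 (mem_univ z)) (P.part_mem.2 (mem_univ y)),
    P.part_eq_iff_mem (P.part_mem.2 (mem_univ y)),
    P.mem_part_iff_part_eq_part (mem_univ z) (mem_univ y)]

theorem isCanonical_toTree : (toTree P hP hkn).IsCanonical where
  label_val _ := rfl
  castSucc_lt_par y := by
    rw [Fin.lt_def, Fin.val_castSucc, toTree_par_castSucc]
    exact lt_blockVertex_part y
  maxVal_lt v w := by
    rintro ⟨y, hy⟩ ⟨z, hz⟩ hvw
    rw [mem_children] at hy hz
    subst hy hz
    rw [children_toTree_par, children_toTree_par,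
      ← blockVertex_lt_blockVertex_iff (P.part_mem.2 (mem_univ z)),
      ← toTree_par_castSucc, ← toTree_par_castSucc]
    exact hvw

def siblingPartition (T : SemiTree n k) : Finpartition (univ : Finset (Fin n)) :=
  Finpartition.ofSetoid (Setoid.ker fun y => T.par y.castSucc)

theorem part_siblingPartition (T : SemiTree n k) (y : Fin n) :
    T.siblingPartition.part y = T.children (T.par y.castSucc) := by
  ext z
  rw [siblingPartition, Finpartition.mem_part_ofSetoid_iff_rel, Setoid.ker_def, mem_children,
    eq_comm]

theorem mem_siblingPartition_parts (T : SemiTree n k) {b : Finset (Fin n)} :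
    b ∈ T.siblingPartition.parts ↔ ∃ v, (T.children v).Nonempty ∧ T.children v = b := by
  simp only [Finpartition.mem_parts_iff_exists_part, part_siblingPartition]
  exact ⟨fun ⟨y, hy⟩ => ⟨_, ⟨y, mem_children.2 rfl⟩, hy⟩,
    fun ⟨v, ⟨y, hy⟩, hb⟩ => ⟨y, by rw [mem_children.1 hy, hb]⟩⟩

theorem children_injOn (T : SemiTree n k) :
    Set.InjOn T.children {v | (T.children v).Nonempty} := by
  rintro v ⟨y, hy⟩ w - h
  exact (mem_children.1 hy).symm.trans (mem_children.1 (h ▸ hy))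

theorem card_siblingPartition_parts (T : SemiTree n k) (hn : 1 ≤ n) :
    #T.siblingPartition.parts = n + 1 - k := by
  -- one class per internal vertex, and all vertices but the `k` leaves are internal
  have hparts : T.siblingPartition.parts =
      ({v | (T.children v).Nonempty} : Finset (Fin (n + 1))).image T.children := by
    ext b
    simp [mem_siblingPartition_parts]
  have hleaves : ({v | ¬(T.children v).Nonempty} : Finset (Fin (n + 1))) =
      univ.map ⟨fun i => (T.label i).castSucc, (Fin.castSucc_injective _).comp T.labelInj⟩ := by
    ext v
    simp [not_nonempty_iff_eq_empty, T.children_eq_empty_iff hn]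
  have hsplit := card_filter_add_card_filter_not (s := univ) fun v => (T.children v).Nonempty
  rw [hleaves, card_map, card_univ, card_univ, Fintype.card_fin, Fintype.card_fin] at hsplit
  rw [hparts, card_image_of_injOn (T.children_injOn.mono fun v hv => by simpa using hv)]
  omega

theorem siblingPartition_toTree {P : Finpartition (univ : Finset (Fin n))}
    (hP : #P.parts = n + 1 - k) (hkn : k ≤ n) : (toTree P hP hkn).siblingPartition = P :=
  Finpartition.ext (Finset.ext fun b => by
    simp only [Finpartition.mem_parts_iff_exists_part, part_siblingPartition, children_toTree_par])

theorem IsCanonical.blockVertex_children {X : SemiTree n k} (hX : X.IsCanonical) (hn : 1 ≤ n)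
    {v : Fin (n + 1)} (hv : (X.children v).Nonempty) :
    blockVertex X.siblingPartition (X.children v) = v.val := by
  have hk := (hX.children_nonempty_iff hn).1 hv
  have habove : ∀ w, v < w → (X.children w).Nonempty := fun w hw =>
    (hX.children_nonempty_iff hn).2 (hk.trans (Fin.lt_def.1 hw).le)
  have hlt_iff : ∀ w, (X.children w).Nonempty →
      (maxVal (X.children v) < maxVal (X.children w) ↔ v < w) := by
    refine fun w hw => ⟨fun h => ?_, hX.maxVal_lt v w hv hw⟩
    rcases lt_trichotomy v w with hvw | rfl | hwv
    · exact hvw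
    · exact absurd h (lt_irrefl _)
    · exact absurd h (hX.maxVal_lt w v hw hv hwv).asymm
  have hfilter : {c ∈ X.siblingPartition.parts | maxVal (X.children v) < maxVal c} =
      (Ioi v).image X.children := by
    ext c
    simp only [mem_filter, mem_siblingPartition_parts, mem_image, mem_Ioi]
    constructor
    · rintro ⟨⟨w, hw, rfl⟩, hlt⟩
      exact ⟨w, (hlt_iff w hw).1 hlt, rfl⟩
    · rintro ⟨w, hvw, rfl⟩
      exact ⟨⟨w, habove w hvw, rfl⟩, (hlt_iff w (habove w hvw)).2 hvw⟩
  rw [blockVertex, hfilter, card_image_of_injOn (X.children_injOn.mono fun w hw =>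
    habove w (mem_Ioi.1 hw)), Fin.card_Ioi]
  have := v.isLt
  omega

theorem IsCanonical.toTree_siblingPartition {X : SemiTree n k} (hX : X.IsCanonical) (hn : 1 ≤ n)
    (hP : #X.siblingPartition.parts = n + 1 - k) (hkn : k ≤ n) :
    toTree X.siblingPartition hP hkn = X := by
  refine ext (funext fun w => ?_) (funext fun i => Fin.ext (hX.label_val i).symm)
  cases w using Fin.lastCases with
  | last => exact (toTree _ hP hkn).rootFix.trans X.rootFix.symm
  | cast y =>
    rw [Fin.ext_iff, toTree_par_castSucc, part_siblingPartition,
      hX.blockVertex_children hn ⟨y, mem_children.2 rfl⟩]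

theorem ncard_quot_semiTreeIso (hn : 1 ≤ n) (hkn : k ≤ n) :
    (Set.univ : Set (Quot (@semiTreeIso n k))).ncard =
      {P : Finpartition (univ : Finset (Fin n)) | #P.parts = n + 1 - k}.ncard := by
  let F : {P : Finpartition (univ : Finset (Fin n)) | #P.parts = n + 1 - k} →
      Quot (@semiTreeIso n k) := fun P => Quot.mk _ (toTree P.1 P.2 hkn)
  have hF : Function.Bijective F := by
    refine ⟨fun P Q h => Subtype.ext ?_, fun q => ?_⟩
    · obtain ⟨σ, hσ⟩ :=
        semiTreeIso_iff.1 (semiTreeIso_equivalence.eqvGen_iff.1 (Quot.eqvGen_exact h))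
      have := isCanonical_toTree.eq_of_isIso hn isCanonical_toTree hσ
      rw [← siblingPartition_toTree P.2 hkn, this, siblingPartition_toTree]
    · induction q using Quot.ind with
      | mk T =>
      refine ⟨⟨_, (T.canonicalForm hn).card_siblingPartition_parts hn⟩, ?_⟩
      change Quot.mk _ (toTree _ _ hkn) = Quot.mk _ T
      rw [(T.isCanonical_canonicalForm hn).toTree_siblingPartition hn]
      exact Quot.sound (semiTreeIso_iff.2 ⟨_, (T.isIso_relabel _ _).symm⟩)
  rw [Set.ncard_univ, ← Nat.card_coe_set_eq]
  exact (Nat.card_congr (Equiv.ofBijective F hF)).symm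

end SemiTree

theorem semilabeled_trees_eq_stirling_general (n k : ℕ) (hn : 1 ≤ n) (hkn : k ≤ n) :
    Fcount n k = Stirling n (n - k + 1) := by
  rw [Fcount, Stirling, show n - k + 1 = n + 1 - k by omega]
  exact SemiTree.ncard_quot_semiTreeIso hn hkn

/-- The number of rooted semilabeled trees with `n` non-root vertices and `k` labeled
leaves equals the Stirling number of the second kind `S(n, n-k+1)`. -/
theorem semilabeled_trees_eq_stirling (n k : ℕ) (hn : 1 ≤ n) (hk : 1 ≤ k) (hkn : k ≤ n) :
    Fcount n k = Stirling n (n - k + 1) :=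
  semilabeled_trees_eq_stirling_general n k hn hkn
end

section
/- The Bell numbers satisfy B_n = B*_{n+1} + B*_n for all n ≥ 1, where B*_m is the number of partitions of an m-element set with no singleton classes. -/
open Finset Polynomial

/-!
Removing a point `a` from a partition of `s` without singleton classes, and splitting what is
left of its class into singletons, gives a partition of `s.erase a` with at least one singleton
class; conversely, merging `a` with all singleton classes into one class undoes this. So
`B*_{n+1}` counts the partitions of an `n`-set having a singleton class, and `B_n = B*_{n+1} + B*_n`
sorts the partitions of an `n`-set by whether they have one.
-/

namespace Finpartition

variable {α : Type*} [DecidableEq α]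

section Embedding

variable {β : Type*} [DecidableEq β] {s : Finset α} {t : Finset β} (f : α ↪ β)

def mapOfEmbedding (hst : s.map f = t) (P : Finpartition s) : Finpartition t := by
  subst hst
  refine ofExistsUnique (P.parts.image (Finset.map f)) ?_ ?_ ?_
  · simp only [mem_image, forall_exists_index, and_imp]
    rintro _ p hp rfl
    exact map_subset_map.2 (P.le hp)
  · simp only [mem_map, forall_exists_index, and_imp]
    rintro _ x hx rfl
    obtain ⟨p, hp, hxp⟩ := P.exists_mem hx
    refine ⟨p.map f, ⟨mem_image_of_mem _ hp, mem_map_of_mem f hxp⟩, ?_⟩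
    rintro _ ⟨hq', hxq⟩
    obtain ⟨q, hq, rfl⟩ := mem_image.1 hq'
    rw [P.eq_of_mem_parts hq hp ((mem_map' f).1 hxq) hxp]
  · simp [P.empty_notMem_parts]

lemma parts_mapOfEmbedding (hst : s.map f = t) (P : Finpartition s) :
    (P.mapOfEmbedding f hst).parts = P.parts.image (Finset.map f) := by
  subst hst; rfl

noncomputable def comapOfEmbedding (hst : s.map f = t) (Q : Finpartition t) : Finpartition s := by
  subst hst
  refine ofExistsUnique (Q.parts.image fun q ↦ q.preimage f f.injective.injOn) ?_ ?_ ?_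
  · simp only [mem_image, forall_exists_index, and_imp]
    rintro _ q hq rfl
    exact preimage_subset (Q.le hq)
  · intro x hx
    obtain ⟨q, hq, hxq⟩ := Q.exists_mem (mem_map_of_mem f hx)
    refine ⟨_, ⟨mem_image_of_mem _ hq, mem_preimage.2 hxq⟩, ?_⟩
    rintro _ ⟨hr', hxr⟩
    obtain ⟨r, hr, rfl⟩ := mem_image.1 hr'
    rw [Q.eq_of_mem_parts hr hq (mem_preimage.1 hxr) hxq]
  · simp only [mem_image, not_exists, not_and]
    intro q hq hempty
    obtain ⟨u, -, rfl⟩ := subset_map_iff.1 (Q.le hq)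
    rw [preimage_map] at hempty
    simp [hempty] at hq

lemma parts_comapOfEmbedding (hst : s.map f = t) (Q : Finpartition t) :
    (Q.comapOfEmbedding f hst).parts = Q.parts.image fun q ↦ q.preimage f f.injective.injOn := by
  subst hst; rfl

noncomputable def equivOfEmbedding (hst : s.map f = t) : Finpartition s ≃ Finpartition t where
  toFun := mapOfEmbedding f hst
  invFun := comapOfEmbedding f hst
  left_inv P := by
    ext1
    simp [parts_comapOfEmbedding, parts_mapOfEmbedding, image_image, Function.comp_def]
  right_inv Q := by
    ext1
    rw [parts_mapOfEmbedding, parts_comapOfEmbedding, image_image]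
    refine (image_congr fun q hq ↦ ?_).trans image_id
    obtain ⟨u, -, rfl⟩ := subset_map_iff.1 (hst ▸ Q.le hq)
    simp

lemma forall_mem_parts_mapOfEmbedding (hst : s.map f = t) (P : Finpartition s) (r : ℕ → Prop) :
    (∀ p ∈ (P.mapOfEmbedding f hst).parts, r #p) ↔ ∀ p ∈ P.parts, r #p := by
  simp [parts_mapOfEmbedding]

end Embedding

section Singletons

variable {s : Finset α} {a : α}

lemma mem_part_comm (P : Finpartition s) {x y : α} : x ∈ P.part y ↔ y ∈ P.part x := by
  simp only [mem_part_iff_exists, and_comm]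

def singletonPts (P : Finpartition s) : Finset α := {x ∈ s | {x} ∈ P.parts}

@[simp]
lemma mem_singletonPts {P : Finpartition s} {x : α} : x ∈ P.singletonPts ↔ {x} ∈ P.parts := by
  simpa [singletonPts] using fun h ↦ P.le h (mem_singleton_self x)

def dissolvePart (Q : Finpartition s) (a : α) : Finpartition (s.erase a) :=
  ofExistsUnique ({p ∈ Q.parts | a ∉ p} ∪ ((Q.part a).erase a).image singleton)
    (by
      simp only [mem_union, mem_filter, mem_image, mem_erase]
      rintro p (⟨hp, hap⟩ | ⟨x, ⟨hxa, hx⟩, rfl⟩)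
      · exact fun x hx ↦ mem_erase.2 ⟨ne_of_mem_of_not_mem hx hap, Q.le hp hx⟩
      · simpa [hxa] using Q.part_subset a hx)
    (by
      intro x hx
      obtain ⟨hxa, hxs⟩ := mem_erase.1 hx
      have hsymm : a ∈ Q.part x ↔ x ∈ Q.part a := Q.mem_part_comm
      have hpart : ∀ p ∈ Q.parts, Q.part x = p ↔ x ∈ p := fun p hp ↦ Q.part_eq_iff_mem hp
      by_cases hx : x ∈ Q.part a
      · refine ⟨{x}, by simp [hx, hxa], ?_⟩
        simp only [mem_union, mem_filter, mem_image, mem_erase]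
        grind
      · refine ⟨Q.part x, by simp_all, ?_⟩
        simp only [mem_union, mem_filter, mem_image, mem_erase]
        grind)
    (by simp [Q.empty_notMem_parts])

lemma mem_dissolvePart_parts {Q : Finpartition s} {p : Finset α} :
    p ∈ (Q.dissolvePart a).parts ↔ p ∈ Q.parts ∧ a ∉ p ∨ ∃ x ∈ (Q.part a).erase a, {x} = p := by
  simp only [dissolvePart, ofExistsUnique_parts, mem_union, mem_filter, mem_image]

def gatherSingletons (P : Finpartition (s.erase a)) (ha : a ∈ s) : Finpartition s :=
  ofExistsUnique (insert (insert a P.singletonPts) {p ∈ P.parts | #p ≠ 1})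
    (by
      simp only [mem_insert, mem_filter]
      rintro p (rfl | ⟨hp, -⟩)
      · exact insert_subset ha ((filter_subset _ _).trans (erase_subset a s))
      · exact (P.le hp).trans (erase_subset a s))
    (by
      intro y hy
      simp only [mem_insert, mem_filter]
      by_cases hya : y = a ∨ {y} ∈ P.parts
      · refine ⟨_, ⟨.inl rfl, by simpa using hya⟩, ?_⟩
        rintro p ⟨rfl | ⟨hp, hp1⟩, hyp⟩
        · rfl
        · have hy : y ≠ a := fun h ↦ by simpa [h] using P.le hp hyp
          have := P.eq_of_mem_parts hp (hya.resolve_left hy) hyp (mem_singleton_self y)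
          simp [this] at hp1
      · push Not at hya
        have hy : y ∈ s.erase a := mem_erase.2 ⟨hya.1, hy⟩
        have h1 : #(P.part y) ≠ 1 := by
          rw [Ne, card_eq_one]
          rintro ⟨z, hz⟩
          obtain rfl : y = z := mem_singleton.1 (hz ▸ P.mem_part hy)
          exact hya.2 (hz ▸ P.part_mem.2 hy)
        refine ⟨P.part y, ⟨.inr ⟨P.part_mem.2 hy, h1⟩, P.mem_part hy⟩, ?_⟩
        rintro p ⟨rfl | ⟨hp, -⟩, hyp⟩
        · simp_all
        · exact P.part_eq_of_mem hp hyp |>.symm)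
    (by simp [P.empty_notMem_parts, (insert_ne_empty _ _).symm])

lemma mem_gatherSingletons_parts {P : Finpartition (s.erase a)} {ha : a ∈ s} {p : Finset α} :
    p ∈ (P.gatherSingletons ha).parts ↔ p = insert a P.singletonPts ∨ p ∈ P.parts ∧ #p ≠ 1 := by
  simp [gatherSingletons]

lemma part_gatherSingletons (P : Finpartition (s.erase a)) (ha : a ∈ s) :
    (P.gatherSingletons ha).part a = insert a P.singletonPts :=
  part_eq_of_mem _ (mem_gatherSingletons_parts.2 (.inl rfl)) (mem_insert_self a _)

lemma dissolvePart_gatherSingletons (P : Finpartition (s.erase a)) (ha : a ∈ s) :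
    (P.gatherSingletons ha).dissolvePart a = P := by
  ext p
  have haS : a ∉ P.singletonPts := fun h ↦ by simpa using P.le (mem_singletonPts.1 h)
  have haP : ∀ p ∈ P.parts, a ∉ p := fun p hp h ↦ by simpa using P.le hp h
  rw [mem_dissolvePart_parts, part_gatherSingletons, mem_gatherSingletons_parts, erase_insert haS]
  constructor
  · rintro (⟨rfl | ⟨hp, -⟩, hap⟩ | ⟨x, hx, rfl⟩)
    · exact absurd (mem_insert_self a _) hap
    · exact hp
    · exact mem_singletonPts.1 hx
  · intro hp
    by_cases hp1 : #p = 1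
    · obtain ⟨x, rfl⟩ := card_eq_one.1 hp1
      exact .inr ⟨x, mem_singletonPts.2 hp, rfl⟩
    · exact .inl ⟨.inr ⟨hp, hp1⟩, haP p hp⟩

lemma singletonPts_dissolvePart (Q : Finpartition s) (a : α) (hQ : ∀ p ∈ Q.parts, 2 ≤ #p) :
    (Q.dissolvePart a).singletonPts = (Q.part a).erase a := by
  ext x
  rw [mem_singletonPts, mem_dissolvePart_parts]
  constructor
  · rintro (⟨hx, -⟩ | ⟨y, hy, hyx⟩)
    · simpa using hQ _ hx
    · rwa [← singleton_injective hyx]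
  · exact fun hx ↦ .inr ⟨x, hx, rfl⟩

lemma gatherSingletons_dissolvePart (Q : Finpartition s) (ha : a ∈ s)
    (hQ : ∀ p ∈ Q.parts, 2 ≤ #p) : (Q.dissolvePart a).gatherSingletons ha = Q := by
  ext p
  rw [mem_gatherSingletons_parts, mem_dissolvePart_parts, singletonPts_dissolvePart Q a hQ,
    insert_erase (Q.mem_part ha)]
  constructor
  · rintro (rfl | ⟨⟨hp, -⟩ | ⟨x, -, rfl⟩, hp1⟩)
    · exact Q.part_mem.2 ha
    · exact hp
    · simp at hp1
  · intro hp
    by_cases hap : a ∈ p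
    · exact .inl (Q.part_eq_of_mem hp hap).symm
    · exact .inr ⟨.inl ⟨hp, hap⟩, by have := hQ p hp; omega⟩

lemma singletonPts_nonempty_iff (P : Finpartition s) :
    P.singletonPts.Nonempty ↔ ¬∀ p ∈ P.parts, 2 ≤ #p := by
  push Not
  constructor
  · rintro ⟨x, hx⟩
    exact ⟨{x}, mem_singletonPts.1 hx, by simp⟩
  · rintro ⟨p, hp, hp2⟩
    have hp1 : #p = 1 := by have := card_pos.2 (P.nonempty_of_mem_parts hp); omega
    obtain ⟨x, rfl⟩ := card_eq_one.1 hp1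
    exact ⟨x, mem_singletonPts.2 hp⟩

lemma two_le_card_of_mem_gatherSingletons (P : Finpartition (s.erase a)) (ha : a ∈ s)
    (hP : P.singletonPts.Nonempty) : ∀ p ∈ (P.gatherSingletons ha).parts, 2 ≤ #p := by
  have haS : a ∉ P.singletonPts := fun h ↦ by simpa using P.le (mem_singletonPts.1 h)
  intro p hp
  obtain rfl | ⟨hp, hp1⟩ := mem_gatherSingletons_parts.1 hp
  · rw [card_insert_of_notMem haS]
    have := hP.card_pos
    omega
  · have := card_pos.2 (P.nonempty_of_mem_parts hp)
    omega

noncomputable def dissolvePartEquiv (ha : a ∈ s) :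
    {Q : Finpartition s // ∀ p ∈ Q.parts, 2 ≤ #p} ≃
      {P : Finpartition (s.erase a) // ¬∀ p ∈ P.parts, 2 ≤ #p} where
  toFun Q := ⟨Q.1.dissolvePart a, by
    rw [← singletonPts_nonempty_iff, singletonPts_dissolvePart Q.1 a Q.2,
      erase_nonempty (Q.1.mem_part ha), ← one_lt_card_iff_nontrivial]
    exact Q.2 _ (Q.1.part_mem.2 ha)⟩
  invFun P := ⟨P.1.gatherSingletons ha,
    two_le_card_of_mem_gatherSingletons P.1 ha ((singletonPts_nonempty_iff P.1).2 P.2)⟩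
  left_inv Q := Subtype.ext (gatherSingletons_dissolvePart Q.1 ha Q.2)
  right_inv P := Subtype.ext (dissolvePart_gatherSingletons P.1 ha)

end Singletons

end Finpartition

open Finpartition

theorem bell_eq_bellStar_add_general (n : ℕ) :
    Bell n = BellStar (n + 1) + BellStar n := by
  have hlast : univ.map Fin.castSuccEmb = univ.erase (Fin.last n) := by
    rw [Fin.univ_castSuccEmb, erase_cons]
  have hsingleton : Set.ncard {P : Finpartition (univ : Finset (Fin n)) |
      ¬∀ p ∈ P.parts, 2 ≤ #p} = BellStar (n + 1) := by
    rw [BellStar, ← Nat.card_coe_set_eq, ← Nat.card_coe_set_eq]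
    exact Nat.card_congr <| ((equivOfEmbedding Fin.castSuccEmb hlast).subtypeEquiv
      fun P ↦ (forall_mem_parts_mapOfEmbedding _ hlast P _).not.symm).trans
      (dissolvePartEquiv (mem_univ (Fin.last n))).symm
  rw [Bell, Set.ncard_univ, ← Set.ncard_add_ncard_compl {P | ¬∀ p ∈ P.parts, 2 ≤ #p},
    hsingleton, Set.compl_ofPred]
  simp only [not_not, BellStar]

/-- Becker's identity: `B_n = B*_{n+1} + B*_n` for `n ≥ 1`, where `B*` counts set
partitions with no singleton classes. -/
theorem bell_eq_bellStar_add (n : ℕ) (hn : 1 ≤ n) :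
    Bell n = BellStar (n + 1) + BellStar n :=
  bell_eq_bellStar_add_general n
end

section
/- For all n ≥ 1, B*_{n+1} = Σ_{i=1}^{n} (-1)^{n-i} B_i, where B_i is the i-th Bell number and B*_m counts partitions of an m-set without singleton classes. -/
open Finset Polynomial

/-! Model an `(n+1)`-set as `Option` of an `n`-set, with `none` the new point. Merging `none` with
all singleton blocks of a partition of the `n`-set is a bijection from the partitions having a
singleton block onto the singleton-free partitions of the `(n+1)`-set; its inverse splits the
block of `none` back into singletons. Hence `B_n = B*_n + B*_{n+1}`, and since `B*_1 = 0` the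
alternating sum telescopes. -/

namespace Finpartition

variable {α : Type*} [DecidableEq α] {s : Finset α}

lemma exists_eq_singleton_or_two_le_card (P : Finpartition s) {p : Finset α}
    (hp : p ∈ P.parts) : (∃ x, p = {x}) ∨ 2 ≤ #p := by
  rcases Nat.lt_or_ge #p 2 with h | h
  · have := (P.nonempty_of_mem_parts hp).card_pos
    exact .inl (card_eq_one.mp (by omega))
  · exact .inr h

lemma exists_singleton_mem_parts_iff (P : Finpartition s) :
    (∃ x, {x} ∈ P.parts) ↔ ¬ ∀ p ∈ P.parts, 2 ≤ #p := by
  simp only [not_forall, not_le]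
  constructor
  · rintro ⟨x, hx⟩
    exact ⟨{x}, hx, by simp⟩
  · rintro ⟨p, hp, hlt⟩
    obtain ⟨x, rfl⟩ | h := P.exists_eq_singleton_or_two_le_card hp
    · exact ⟨x, hp⟩
    · omega

def isolatedPoints (P : Finpartition s) : Finset α := {x ∈ s | {x} ∈ P.parts}

@[simp]
lemma mem_isolatedPoints (P : Finpartition s) {x : α} :
    x ∈ P.isolatedPoints ↔ {x} ∈ P.parts := by
  simp only [isolatedPoints, mem_filter, and_iff_right_iff_imp]
  exact fun h => P.le h (mem_singleton_self x)

@[simps]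
def mergeIsolated (P : Finpartition s) : Finpartition (insertNone s) where
  parts := insert (insertNone P.isolatedPoints)
    ({p ∈ P.parts | 2 ≤ #p}.image (Finset.map .some))
  supIndep := by
    rw [supIndep_iff_pairwiseDisjoint, coe_insert, coe_image]
    refine .insert ?_ ?_
    · rintro _ ⟨p, hp, rfl⟩ _ ⟨q, hq, rfl⟩ hpq
      exact disjoint_map _ |>.mpr <| P.disjoint (mem_filter.mp hp).1 (mem_filter.mp hq).1
        (by rintro rfl; exact hpq rfl)
    · rintro _ ⟨p, hp, rfl⟩ -
      obtain ⟨hp, hcard⟩ := mem_filter.mp hp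
      refine disjoint_left.mpr fun o ho hop => ?_
      obtain ⟨x, hx, rfl⟩ := mem_map.mp hop
      have hxp : {x} = p := P.eq_of_mem_parts (by simpa using ho) hp (mem_singleton_self x) hx
      simp [← hxp] at hcard
  sup_parts := by
    refine le_antisymm (Finset.sup_le fun p hp => ?_) fun o ho => mem_sup.mpr ?_
    · obtain rfl | ⟨q, hq, rfl⟩ := mem_insert.mp hp |>.imp_right mem_image.mp
      · exact insertNone.monotone (filter_subset _ _)
      · intro o ho
        obtain ⟨x, hx, rfl⟩ := mem_map.mp ho
        exact some_mem_insertNone.mpr (P.le (mem_filter.mp hq).1 hx)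
    · cases o with
      | none => exact ⟨_, mem_insert_self _ _, none_mem_insertNone⟩
      | some x =>
        obtain ⟨p, hp, hxp⟩ := P.exists_mem (some_mem_insertNone.mp ho)
        obtain ⟨y, rfl⟩ | hcard := P.exists_eq_singleton_or_two_le_card hp
        · exact ⟨_, mem_insert_self _ _, by simp_all⟩
        · exact ⟨p.map .some, mem_insert_of_mem (mem_image_of_mem _ (mem_filter.mpr ⟨hp, hcard⟩)),
            mem_map_of_mem _ hxp⟩
  bot_notMem := by
    simp only [mem_insert, mem_image, mem_filter, bot_eq_empty, not_or, not_exists, not_and]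
    exact ⟨insertNone_nonempty.ne_empty.symm, fun p hp h => P.ne_empty hp.1 (map_eq_empty.mp h)⟩

@[simps]
def splitPartNone (P : Finpartition (insertNone s)) : Finpartition s where
  parts := {B ∈ P.parts | none ∉ B}.image eraseNone ∪ (eraseNone (P.part none)).image singleton
  supIndep := by
    have hnone : P.part none ∈ P.parts := P.part_mem.mpr none_mem_insertNone
    rw [supIndep_iff_pairwiseDisjoint, coe_union, coe_image, coe_image]
    refine .union ?_ ?_ ?_
    · rintro _ ⟨B, hB, rfl⟩ _ ⟨C, hC, rfl⟩ hBC
      refine disjoint_left.mpr fun x hxB hxC => ?_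
      exact disjoint_left.mp (P.disjoint (mem_filter.mp hB).1 (mem_filter.mp hC).1
        (by rintro rfl; exact hBC rfl)) (mem_eraseNone.mp hxB) (mem_eraseNone.mp hxC)
    · rintro _ ⟨x, -, rfl⟩ _ ⟨y, -, rfl⟩ hxy
      exact disjoint_singleton.mpr (by rintro rfl; exact hxy rfl)
    · rintro _ ⟨B, hB, rfl⟩ _ ⟨x, hx, rfl⟩ -
      obtain ⟨hB, hBn⟩ := mem_filter.mp hB
      refine disjoint_singleton_right.mpr fun hxB => hBn ?_
      rw [← P.part_eq_of_mem hB (mem_eraseNone.mp hxB),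
        P.part_eq_of_mem hnone (mem_eraseNone.mp hx)]
      exact P.mem_part none_mem_insertNone
  sup_parts := by
    refine le_antisymm (Finset.sup_le fun t ht => ?_) fun x hx => mem_sup.mpr ?_
    · obtain ⟨B, hB, rfl⟩ | ⟨x, hx, rfl⟩ := mem_union.mp ht |>.imp mem_image.mp mem_image.mp
      · intro x hx
        exact some_mem_insertNone.mp (P.le (mem_filter.mp hB).1 (mem_eraseNone.mp hx))
      · exact singleton_subset_iff.mpr <| some_mem_insertNone.mp <|
          P.part_subset none (mem_eraseNone.mp hx)
    · have hx : some x ∈ insertNone s := some_mem_insertNone.mpr hx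
      by_cases hn : none ∈ P.part (some x)
      · refine ⟨{x}, mem_union_right _ (mem_image_of_mem _ (mem_eraseNone.mpr ?_)),
          mem_singleton_self x⟩
        rw [P.part_eq_of_mem (P.part_mem.mpr hx) hn]
        exact P.mem_part hx
      · exact ⟨_, mem_union_left _ (mem_image_of_mem _ (mem_filter.mpr ⟨P.part_mem.mpr hx, hn⟩)),
          mem_eraseNone.mpr (P.mem_part hx)⟩
  bot_notMem := by
    simp only [bot_eq_empty, mem_union, mem_image, mem_filter, not_or, not_exists, not_and]
    refine ⟨fun B hB hBe => ?_, fun x _ => singleton_ne_empty x⟩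
    obtain ⟨o, ho⟩ := P.nonempty_of_mem_parts hB.1
    cases o with
    | none => exact hB.2 ho
    | some x => simpa [hBe] using mem_eraseNone.mpr ho

lemma part_none_mergeIsolated (P : Finpartition s) :
    P.mergeIsolated.part none = insertNone P.isolatedPoints :=
  P.mergeIsolated.part_eq_of_mem (by simp) none_mem_insertNone

lemma splitPartNone_mergeIsolated (P : Finpartition s) : P.mergeIsolated.splitPartNone = P := by
  ext t
  simp only [splitPartNone_parts, mergeIsolated_parts, part_none_mergeIsolated, mem_union,
    mem_image, mem_filter, mem_insert, eraseNone_insertNone, mem_isolatedPoints]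
  constructor
  · rintro (⟨B, ⟨rfl | ⟨p, ⟨hp, -⟩, rfl⟩, hn⟩, rfl⟩ | ⟨x, hx, rfl⟩)
    · exact absurd none_mem_insertNone hn
    · simpa using hp
    · exact hx
  · intro ht
    obtain ⟨x, rfl⟩ | h := P.exists_eq_singleton_or_two_le_card ht
    · exact .inr ⟨x, ht, rfl⟩
    · exact .inl ⟨_, ⟨.inr ⟨t, ⟨ht, h⟩, rfl⟩, by simp⟩, eraseNone_map_some t⟩

lemma isolatedPoints_splitPartNone (P : Finpartition (insertNone s))
    (hP : ∀ p ∈ P.parts, 2 ≤ #p) : P.splitPartNone.isolatedPoints = eraseNone (P.part none) := by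
  ext x
  simp only [mem_isolatedPoints, splitPartNone_parts, mem_union, mem_image, mem_filter,
    singleton_inj, exists_eq_right]
  refine or_iff_right fun ⟨B, ⟨hB, hn⟩, hBx⟩ => ?_
  have hcard := congrArg card hBx
  rw [card_eraseNone_of_not_mem hn, card_singleton] at hcard
  exact absurd (hP B hB) (by omega)

lemma mergeIsolated_splitPartNone (P : Finpartition (insertNone s))
    (hP : ∀ p ∈ P.parts, 2 ≤ #p) : P.splitPartNone.mergeIsolated = P := by
  have hnone : none ∈ P.part none := P.mem_part none_mem_insertNone
  ext B
  simp only [mergeIsolated_parts, isolatedPoints_splitPartNone P hP, insertNone_eraseNone,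
    insert_eq_of_mem hnone, mem_insert, mem_image, mem_filter, splitPartNone_parts, mem_union]
  constructor
  · rintro (rfl | ⟨_, ⟨⟨C, ⟨hC, hn⟩, rfl⟩ | ⟨x, -, rfl⟩, hcard⟩, rfl⟩)
    · exact P.part_mem.mpr none_mem_insertNone
    · rwa [map_some_eraseNone, erase_eq_of_notMem hn]
    · simp at hcard
  · intro hB
    by_cases hn : none ∈ B
    · exact .inl (P.part_eq_of_mem hB hn).symm
    · refine .inr ⟨eraseNone B, ⟨.inl ⟨B, ⟨hB, hn⟩, rfl⟩, ?_⟩, ?_⟩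
      · rw [card_eraseNone_of_not_mem hn]
        exact hP B hB
      · rw [map_some_eraseNone, erase_eq_of_notMem hn]

lemma two_le_card_of_mem_mergeIsolated_parts (P : Finpartition s) (hP : ∃ x, {x} ∈ P.parts) :
    ∀ p ∈ P.mergeIsolated.parts, 2 ≤ #p := by
  obtain ⟨x, hx⟩ := hP
  simp only [mergeIsolated_parts, mem_insert, mem_image, mem_filter]
  rintro _ (rfl | ⟨p, ⟨-, hp⟩, rfl⟩)
  · have : 0 < #P.isolatedPoints := card_pos.mpr ⟨x, (P.mem_isolatedPoints).mpr hx⟩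
    rw [card_insertNone]
    omega
  · rwa [card_map]

lemma exists_singleton_mem_splitPartNone_parts (P : Finpartition (insertNone s))
    (hP : ∀ p ∈ P.parts, 2 ≤ #p) : ∃ x, {x} ∈ P.splitPartNone.parts := by
  have hcard : 1 ≤ #(eraseNone (P.part none)) := by
    rw [card_eraseNone_of_mem (P.mem_part none_mem_insertNone)]
    have := hP _ (P.part_mem.mpr none_mem_insertNone)
    omega
  obtain ⟨x, hx⟩ := card_pos.mp hcard
  rw [← isolatedPoints_splitPartNone P hP, mem_isolatedPoints] at hx
  exact ⟨x, hx⟩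

lemma bijOn_mergeIsolated :
    Set.BijOn mergeIsolated {P : Finpartition s | ∃ x, {x} ∈ P.parts}
      {P : Finpartition (insertNone s) | ∀ p ∈ P.parts, 2 ≤ #p} :=
  Set.InvOn.bijOn ⟨fun P _ => splitPartNone_mergeIsolated P, mergeIsolated_splitPartNone⟩
    two_le_card_of_mem_mergeIsolated_parts exists_singleton_mem_splitPartNone_parts

lemma ncard_add_ncard_insertNone (s : Finset α) :
    {P : Finpartition s | ∀ p ∈ P.parts, 2 ≤ #p}.ncard +
      {P : Finpartition (insertNone s) | ∀ p ∈ P.parts, 2 ≤ #p}.ncard =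
      Nat.card (Finpartition s) := by
  rw [← bijOn_mergeIsolated.ncard_eq]
  simp only [exists_singleton_mem_parts_iff]
  exact Set.ncard_add_ncard_compl {P : Finpartition s | ∀ p ∈ P.parts, 2 ≤ #p}

section Congr

variable {β : Type*} [Fintype α] [Fintype β] [DecidableEq β]

def congrUniv (e : α ≃ β) (P : Finpartition (univ : Finset α)) : Finpartition (univ : Finset β) :=
  (P.map ⟨e.finsetCongr, map_subset_map⟩).copy (map_univ_equiv e)

lemma congrUniv_parts (e : α ≃ β) (P : Finpartition (univ : Finset α)) :
    (congrUniv e P).parts = P.parts.map e.finsetCongr.toEmbedding :=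
  rfl

lemma ncard_setOf_two_le_card_le_of_equiv (e : α ≃ β) :
    {P : Finpartition (univ : Finset α) | ∀ p ∈ P.parts, 2 ≤ #p}.ncard ≤
      {P : Finpartition (univ : Finset β) | ∀ p ∈ P.parts, 2 ≤ #p}.ncard := by
  refine Set.ncard_le_ncard_of_injOn (congrUniv e) (fun P hP p hp => ?_) fun P _ Q _ h => ?_
  · obtain ⟨q, hq, rfl⟩ := mem_map.mp ((congrUniv_parts e P).le hp)
    simpa using hP q hq
  · ext1
    simpa only [congrUniv_parts, map_inj] using congrArg parts h

lemma ncard_setOf_two_le_card_congr (e : α ≃ β) :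
    {P : Finpartition (univ : Finset α) | ∀ p ∈ P.parts, 2 ≤ #p}.ncard =
      {P : Finpartition (univ : Finset β) | ∀ p ∈ P.parts, 2 ≤ #p}.ncard :=
  le_antisymm (ncard_setOf_two_le_card_le_of_equiv e) (ncard_setOf_two_le_card_le_of_equiv e.symm)

end Congr

end Finpartition

lemma bell_eq_bellStar_add_bellStar_succ (n : ℕ) : Bell n = BellStar n + BellStar (n + 1) := by
  rw [Bell, Set.ncard_univ, ← Finpartition.ncard_add_ncard_insertNone, BellStar, BellStar,
    Finpartition.ncard_setOf_two_le_card_congr (finSuccEquiv n), univ_option]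

lemma bellStar_one : BellStar 1 = 0 := by
  refine (Set.ncard_eq_zero).mpr (Set.eq_empty_iff_forall_notMem.mpr fun P hP => ?_)
  obtain ⟨p, hp, -⟩ := P.exists_mem (mem_univ 0)
  have hle : #p ≤ Fintype.card (Fin 1) := card_le_univ p
  have := hP p hp
  rw [Fintype.card_fin] at hle
  omega

theorem bellStar_alternating_sum_general (n : ℕ) :
    (BellStar (n + 1) : ℤ) = ∑ i ∈ Finset.Icc 1 n, (-1 : ℤ) ^ (n - i) * Bell i := by
  induction n with
  | zero => simp [bellStar_one]
  | succ n ih =>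
    have hsign : ∑ i ∈ Icc 1 n, (-1 : ℤ) ^ (n + 1 - i) * Bell i =
        -∑ i ∈ Icc 1 n, (-1 : ℤ) ^ (n - i) * Bell i := by
      rw [← sum_neg_distrib]
      refine sum_congr rfl fun i hi => ?_
      rw [Nat.sub_add_comm (mem_Icc.mp hi).2, pow_succ]
      ring
    rw [sum_Icc_succ_top (by omega), hsign, ← ih, Nat.sub_self, bell_eq_bellStar_add_bellStar_succ]
    push_cast
    ring

/-- For `n ≥ 1`, `B*_{n+1} = Σ_{i=1}^{n} (-1)^{n-i} B_i`. -/
theorem bellStar_alternating_sum (n : ℕ) (hn : 1 ≤ n) :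
    (BellStar (n + 1) : ℤ) = ∑ i ∈ Finset.Icc 1 n, (-1 : ℤ) ^ (n - i) * Bell i :=
  bellStar_alternating_sum_general n
end

section
/- Define polynomials S_n(x) = Σ_k S*(n,k) x^k. Then S_1(x) = 0, S_2(x) = x, and for n ≥ 3, S_n(x) = (n−1)·x·S_{n−2}(x) + x·S'_{n−1}(x). -/
open Finset Polynomial

/-- The generating polynomial `S_n(x) = Σ_k S*(n,k) x^k`. -/
noncomputable def SPoly (n : ℕ) : Polynomial ℝ :=
  ∑ k ∈ Finset.range (n + 1), Polynomial.C (SStar n k : ℝ) * Polynomial.X ^ k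

/-!
Delete a point `x` from a partition counted by `S*(n, k + 1)`. Either the block of `x` is a pair
`{x, y}`: there are `n - 1` choices of `y`, and the other blocks partition the remaining `n - 2`
points into `k` blocks; or the block of `x` has at least three points, and deleting `x` leaves a
partition of `n - 1` points into `k + 1` blocks with one marked block (the one `x` came from).
Hence `S*(n, k + 1) = (n - 1) S*(n - 2, k) + (k + 1) S*(n - 1, k + 1)`, which is the recurrence
read off coefficient by coefficient.
-/

namespace Finpartition

section GeneralizedBooleanAlgebra

variable {α : Type*} [GeneralizedBooleanAlgebra α] [DecidableEq α] {a b c : α}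

theorem parts_avoid_of_mem (P : Finpartition a) (hb : b ∈ P.parts) :
    (P.avoid b).parts = P.parts.erase b := by
  ext d
  rw [mem_avoid, mem_erase]
  constructor
  · rintro ⟨e, he, heb, rfl⟩
    have hne : e ≠ b := by rintro rfl; exact heb le_rfl
    have hdisj : Disjoint e b := P.disjoint he hb hne
    rw [hdisj.sdiff_eq_left]
    exact ⟨hne, he⟩
  · rintro ⟨hne, hd⟩
    have hdisj : Disjoint d b := P.disjoint hd hb hne
    exact ⟨d, hd, fun hle => P.ne_bot hd (hdisj.eq_bot_of_le hle), hdisj.sdiff_eq_left⟩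

theorem parts_avoid_extend (P : Finpartition a) (hb : b ≠ ⊥) (hab : Disjoint a b)
    (hc : a ⊔ b = c) : ((P.extend hb hab hc).avoid b).parts = P.parts := by
  rw [parts_avoid_of_mem _ (by simp), extend_parts, erase_insert]
  exact fun hbP => hb (disjoint_self.1 (hab.mono_left (P.le hbP)))

theorem parts_extend_avoid (P : Finpartition c) (hb : b ∈ P.parts) :
    ((P.avoid b).extend (P.ne_bot hb) disjoint_sdiff_self_left (sdiff_sup_cancel (P.le hb))).parts =
      P.parts := by
  rw [extend_parts, parts_avoid_of_mem _ hb, insert_erase hb]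

end GeneralizedBooleanAlgebra

variable {α : Type*} [DecidableEq α] {s : Finset α} {x : α}

theorem card_part_eq_two_iff (P : Finpartition s) (hx : x ∈ s) :
    #(P.part x) = 2 ↔ ∃ y ∈ s \ {x}, {x, y} ∈ P.parts := by
  have hxP : x ∈ P.part x := P.mem_part hx
  constructor
  · intro h2
    obtain ⟨y, hy⟩ := card_eq_one.1 (by rw [card_erase_of_mem hxP, h2])
    have hyP : y ∈ (P.part x).erase x := hy ▸ mem_singleton_self y
    refine ⟨y, mem_sdiff.2 ⟨P.part_subset x (mem_of_mem_erase hyP), ?_⟩, ?_⟩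
    · simpa using ne_of_mem_erase hyP
    · rw [← hy, insert_erase hxP]
      exact P.part_mem.2 hx
  · rintro ⟨y, hy, hxy⟩
    rw [P.part_eq_of_mem hxy (mem_insert_self x {y}), card_pair]
    simpa [eq_comm] using (mem_sdiff.1 hy).2

theorem parts_avoid_singleton (P : Finpartition s) (hx : x ∈ s) (h : 2 ≤ #(P.part x)) :
    (P.avoid {x}).parts = insert ((P.part x).erase x) (P.parts.erase (P.part x)) := by
  have hxP : x ∈ P.part x := P.mem_part hx
  have not_le_singleton : ∀ d ∈ P.parts, d ≠ {x} → ¬ d ≤ {x} := fun d hd hne hle =>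
    hne (subset_singleton_iff.1 hle |>.resolve_left (P.ne_empty hd))
  have hpx : P.part x ≠ {x} := fun h' => by rw [h', card_singleton] at h; omega
  ext c
  simp only [mem_avoid, mem_insert, mem_erase, ← erase_eq]
  constructor
  · rintro ⟨d, hd, -, rfl⟩
    by_cases hdx : x ∈ d
    · exact .inl (by rw [P.part_eq_of_mem hd hdx])
    · rw [erase_eq_of_notMem hdx]
      exact .inr ⟨fun h' => hdx (h' ▸ hxP), hd⟩
  · rintro (rfl | ⟨hne, hc⟩)
    · exact ⟨P.part x, P.part_mem.2 hx, not_le_singleton _ (P.part_mem.2 hx) hpx, rfl⟩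
    · have hxc : x ∉ c := fun hxc => hne (P.part_eq_of_mem hc hxc).symm
      refine ⟨c, hc, not_le_singleton _ hc fun hcx => hxc (by simp [hcx]), ?_⟩
      exact erase_eq_of_notMem hxc

theorem erase_part_notMem_erase_parts (P : Finpartition s) (hx : x ∈ s) (h : 2 ≤ #(P.part x)) :
    (P.part x).erase x ∉ P.parts.erase (P.part x) := by
  have hxP : x ∈ P.part x := P.mem_part hx
  intro he
  obtain ⟨y, hy⟩ := card_pos.1 (by rw [card_erase_of_mem hxP]; omega)
  exact ne_of_mem_erase he
    (P.eq_of_mem_parts (mem_of_mem_erase he) (P.part_mem.2 hx) hy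
      (mem_of_mem_erase hy))

theorem card_parts_avoid_singleton (P : Finpartition s) (hx : x ∈ s) (h : 2 ≤ #(P.part x)) :
    #(P.avoid {x}).parts = #P.parts := by
  rw [parts_avoid_singleton P hx h, card_insert_of_notMem (erase_part_notMem_erase_parts P hx h),
    card_erase_add_one (P.part_mem.2 hx)]

theorem erase_part_mem_avoid_singleton (P : Finpartition s) (hx : x ∈ s) (h : 2 ≤ #(P.part x)) :
    (P.part x).erase x ∈ (P.avoid {x}).parts := by
  rw [parts_avoid_singleton P hx h]
  exact mem_insert_self _ _

def insertIntoPart {q : Finset α} (Q : Finpartition (s \ {x})) (hx : x ∈ s)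
    (hq : q ∈ Q.parts) : Finpartition s :=
  (Q.avoid q).extend (insert_ne_empty x q)
    (disjoint_insert_right.2 ⟨by simp, disjoint_sdiff_self_left⟩)
    (by rw [sup_eq_union, union_insert, sdiff_union_of_subset (Q.le hq),
      ← erase_eq, insert_erase hx])

theorem notMem_of_mem_parts_sdiff_singleton {Q : Finpartition (s \ {x})} {q : Finset α}
    (hq : q ∈ Q.parts) : x ∉ q := fun hxq => by simpa using Q.le hq hxq

section insertIntoPart

variable {q : Finset α} (Q : Finpartition (s \ {x})) (hx : x ∈ s) (hq : q ∈ Q.parts)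

theorem parts_insertIntoPart :
    (Q.insertIntoPart hx hq).parts = insert (insert x q) (Q.parts.erase q) := by
  rw [insertIntoPart, extend_parts, parts_avoid_of_mem _ hq]

theorem card_parts_insertIntoPart : #(Q.insertIntoPart hx hq).parts = #Q.parts := by
  rw [insertIntoPart, card_extend, parts_avoid_of_mem _ hq, card_erase_add_one hq]

theorem part_insertIntoPart : (Q.insertIntoPart hx hq).part x = insert x q :=
  part_eq_of_mem _ (by simp [parts_insertIntoPart]) (mem_insert_self x q)

theorem avoid_insertIntoPart : (Q.insertIntoPart hx hq).avoid {x} = Q := by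
  have hxq := notMem_of_mem_parts_sdiff_singleton hq
  have hnew : insert x q ∉ Q.parts.erase q := fun h =>
    notMem_of_mem_parts_sdiff_singleton (mem_of_mem_erase h) (mem_insert_self x q)
  have h2 : 2 ≤ #((Q.insertIntoPart hx hq).part x) := by
    rw [part_insertIntoPart, card_insert_of_notMem hxq]
    have := card_pos.2 (Q.nonempty_of_mem_parts hq)
    omega
  apply Finpartition.ext
  rw [parts_avoid_singleton _ hx h2, part_insertIntoPart, parts_insertIntoPart,
    erase_insert hnew, erase_insert hxq, insert_erase hq]

end insertIntoPart

theorem insertIntoPart_avoid_singleton (P : Finpartition s) (hx : x ∈ s) (h : 2 ≤ #(P.part x)) :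
    (P.avoid {x}).insertIntoPart hx (P.erase_part_mem_avoid_singleton hx h) = P := by
  apply Finpartition.ext
  rw [parts_insertIntoPart, parts_avoid_singleton P hx h,
    erase_insert (erase_part_notMem_erase_parts P hx h),
    insert_erase (P.mem_part hx), insert_erase (P.part_mem.2 hx)]

end Finpartition

open Finpartition

variable {α : Type*} [DecidableEq α]

def sstarPartitions (s : Finset α) (k : ℕ) : Finset (Finpartition s) :=
  {P | #P.parts = k ∧ ∀ p ∈ P.parts, 2 ≤ #p}

@[simp]
theorem mem_sstarPartitions {s : Finset α} {k : ℕ} {P : Finpartition s} :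
    P ∈ sstarPartitions s k ↔ #P.parts = k ∧ ∀ p ∈ P.parts, 2 ≤ #p := by
  simp [sstarPartitions]

theorem card_filter_mem_parts_sstarPartitions {s b : Finset α} (hbs : b ⊆ s) (hb : 2 ≤ #b)
    (k : ℕ) :
    #{P ∈ sstarPartitions s (k + 1) | b ∈ P.parts} = #(sstarPartitions (s \ b) k) := by
  have hb0 : b ≠ ⊥ := nonempty_iff_ne_empty.1 (card_pos.1 (by omega))
  have hc : s \ b ⊔ b = s := sdiff_sup_cancel hbs
  symm
  refine card_nbij' (fun Q => Q.extend hb0 disjoint_sdiff_self_left hc) (fun P => P.avoid b)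
    ?_ ?_ ?_ ?_
  · intro Q hQ
    rw [mem_coe, mem_sstarPartitions] at hQ
    rw [mem_coe, mem_filter, mem_sstarPartitions, card_extend, hQ.1, extend_parts]
    exact ⟨⟨rfl, forall_mem_insert _ _ _ |>.2 ⟨hb, hQ.2⟩⟩, mem_insert_self _ _⟩
  · intro P hP
    rw [mem_coe, mem_filter, mem_sstarPartitions] at hP
    obtain ⟨⟨hcard, hsize⟩, hbP⟩ := hP
    rw [mem_coe, mem_sstarPartitions, parts_avoid_of_mem _ hbP,
      card_erase_of_mem hbP, hcard]
    exact ⟨rfl, fun p hp => hsize p (mem_of_mem_erase hp)⟩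
  · intro Q _
    exact Finpartition.ext (parts_avoid_extend Q hb0 disjoint_sdiff_self_left hc)
  · intro P hP
    exact Finpartition.ext (parts_extend_avoid P (mem_filter.1 hP).2)

theorem card_filter_card_part_ne_two {s : Finset α} {x : α} (hx : x ∈ s) (k : ℕ) :
    #{P ∈ sstarPartitions s (k + 1) | #(P.part x) ≠ 2} =
      (k + 1) * #(sstarPartitions (s \ {x}) (k + 1)) := by
  have hmarked : #((sstarPartitions (s \ {x}) (k + 1)).sigma fun Q => Q.parts) =
      (k + 1) * #(sstarPartitions (s \ {x}) (k + 1)) := by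
    rw [card_sigma, sum_const_nat fun Q hQ => (mem_sstarPartitions.1 hQ).1,
      mul_comm]
  rw [← hmarked]
  have h3 : ∀ P ∈ {P ∈ sstarPartitions s (k + 1) | #(P.part x) ≠ 2}, 3 ≤ #(P.part x) := by
    intro P hP
    obtain ⟨hP, h2⟩ := mem_filter.1 hP
    have := (mem_sstarPartitions.1 hP).2 _ (P.part_mem.2 hx)
    omega
  refine card_bij' (fun P _ => ⟨P.avoid {x}, (P.part x).erase x⟩)
    (fun Qq hQq => Qq.1.insertIntoPart hx (mem_sigma.1 hQq).2) (fun P hP => ?_) ?_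
    (fun P hP => insertIntoPart_avoid_singleton P hx (by have := h3 P hP; omega)) ?_
  · have h3P := h3 P hP
    have h2 : 2 ≤ #(P.part x) := by omega
    obtain ⟨hcard, hsize⟩ := mem_sstarPartitions.1 (mem_filter.1 hP).1
    refine mem_sigma.2 ⟨mem_sstarPartitions.2 ⟨?_, ?_⟩,
      P.erase_part_mem_avoid_singleton hx h2⟩
    · rw [card_parts_avoid_singleton P hx h2, hcard]
    · rw [parts_avoid_singleton P hx h2, forall_mem_insert,
        card_erase_of_mem (P.mem_part hx)]
      exact ⟨by omega, fun p hp => hsize p (mem_of_mem_erase hp)⟩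
  · rintro ⟨Q, q⟩ hQq
    simp only [mem_sigma, mem_sstarPartitions] at hQq
    obtain ⟨⟨hcard, hsize⟩, hq⟩ := hQq
    have hq2 := hsize q hq
    have hxq := notMem_of_mem_parts_sdiff_singleton hq
    refine mem_filter.2 ⟨mem_sstarPartitions.2 ⟨?_, ?_⟩, ?_⟩
    · rw [card_parts_insertIntoPart, hcard]
    · rw [parts_insertIntoPart, forall_mem_insert, card_insert_of_notMem hxq]
      exact ⟨by omega, fun p hp => hsize p (mem_of_mem_erase hp)⟩
    · rw [part_insertIntoPart, card_insert_of_notMem hxq]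
      omega
  · rintro ⟨Q, q⟩ hQq
    have hq : q ∈ Q.parts := (mem_sigma.1 hQq).2
    refine Sigma.ext (avoid_insertIntoPart Q hx hq) (heq_of_eq ?_)
    rw [part_insertIntoPart, erase_insert (notMem_of_mem_parts_sdiff_singleton hq)]

theorem card_sstarPartitions_succ {s : Finset α} {x : α} (hx : x ∈ s) (k : ℕ) :
    #(sstarPartitions s (k + 1)) = ∑ y ∈ s \ {x}, #(sstarPartitions (s \ {x, y}) k) +
      (k + 1) * #(sstarPartitions (s \ {x}) (k + 1)) := by
  rw [← card_filter_add_card_filter_not fun P : Finpartition s => #(P.part x) = 2,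
    card_filter_card_part_ne_two hx]
  congr 1
  have hunion : {P ∈ sstarPartitions s (k + 1) | #(P.part x) = 2} =
      (s \ {x}).biUnion fun y => {P ∈ sstarPartitions s (k + 1) | {x, y} ∈ P.parts} := by
    ext P
    simp only [mem_filter, mem_biUnion, card_part_eq_two_iff P hx]
    tauto
  rw [hunion, card_biUnion]
  · refine sum_congr rfl fun y hy => card_filter_mem_parts_sstarPartitions ?_ ?_ k
    · obtain ⟨hys, hyx⟩ := mem_sdiff.1 hy
      exact insert_subset hx (singleton_subset_iff.2 hys)
    · rw [card_pair]
      simpa [eq_comm] using (mem_sdiff.1 hy).2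
  · intro y hy y' _ hyy'
    refine disjoint_filter.2 fun P _ hxy hxy' => hyy' ?_
    have hpair := (P.part_eq_of_mem hxy (mem_insert_self x _)).symm.trans
      (P.part_eq_of_mem hxy' (mem_insert_self x _))
    have hy'' : y ∈ ({x, y'} : Finset α) := hpair ▸ mem_insert_of_mem (mem_singleton_self y)
    have hyx : y ≠ x := by simpa using (mem_sdiff.1 hy).2
    simpa [hyx] using hy''

theorem sstarPartitions_eq_empty_of_card_lt {s : Finset α} {k : ℕ} (h : #s < 2 * k) :
    sstarPartitions s k = ∅ := by
  refine eq_empty_of_forall_notMem fun P hP => ?_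
  obtain ⟨hcard, hsize⟩ := mem_sstarPartitions.1 hP
  have := card_nsmul_le_sum P.parts (fun p => #p) 2 hsize
  rw [P.sum_card_parts, hcard, smul_eq_mul] at this
  omega

theorem card_sstarPartitions_zero (s : Finset α) :
    #(sstarPartitions s 0) = if s = ∅ then 1 else 0 := by
  split_ifs with hs
  · subst hs
    refine card_eq_one.2 ⟨⊥, eq_singleton_iff_unique_mem.2 ⟨?_, fun P _ => ?_⟩⟩
    · simp
    · exact Finpartition.ext ((P.parts_eq_empty_iff.2 rfl).trans (parts_eq_empty_iff.2 rfl).symm)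
  · refine card_eq_zero.2 (eq_empty_of_forall_notMem fun P hP => hs ?_)
    exact P.parts_eq_empty_iff.1 (card_eq_zero.1 (mem_sstarPartitions.1 hP).1)

theorem card_sstarPartitions_succ_eq {f : ℕ → ℕ → ℕ} {s : Finset α} {m : ℕ}
    (hs : #s = m + 1)
    (hf : ∀ t ⊆ s, #t ≤ m → ∀ j, #(sstarPartitions t j) = f #t j) (k : ℕ) :
    #(sstarPartitions s (k + 1)) = m * f (m - 1) k + (k + 1) * f m (k + 1) := by
  obtain ⟨x, hx⟩ := card_pos.1 (by omega : 0 < #s)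
  have hsx : #(s \ {x}) = m := by
    rw [card_sdiff_of_subset (singleton_subset_iff.2 hx), card_singleton, hs,
      Nat.add_sub_cancel]
  have hsxy : ∀ y ∈ s \ {x}, #(s \ {x, y}) = m - 1 := fun y hy => by
    obtain ⟨hys, hyx⟩ := mem_sdiff.1 hy
    rw [card_sdiff_of_subset (insert_subset hx (singleton_subset_iff.2 hys)),
      card_pair (by simpa [eq_comm] using hyx), hs]
    omega
  rw [card_sstarPartitions_succ hx, hf _ sdiff_subset hsx.le, hsx,
    sum_const_nat fun y hy => ?_, hsx]
  rw [hf _ sdiff_subset (by rw [hsxy y hy]; omega), hsxy y hy]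

universe u

theorem card_sstarPartitions_congr {α β : Type u} [DecidableEq α] [DecidableEq β]
    (s : Finset α) (t : Finset β) (h : #s = #t) (k : ℕ) :
    #(sstarPartitions s k) = #(sstarPartitions t k) := by
  induction hm : #s using Nat.strong_induction_on generalizing α β s t k with
  | _ m ih =>
  rcases k with _ | k
  · simp only [card_sstarPartitions_zero, ← card_eq_zero, h]
  rcases m with _ | m
  · rw [sstarPartitions_eq_empty_of_card_lt (by omega),
      sstarPartitions_eq_empty_of_card_lt (by omega), card_empty, card_empty]
  -- Both sides are compared with a reference set of the same size in the same universe.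
  let f n j := #(sstarPartitions (univ : Finset (ULift.{u} (Fin n))) j)
  have hf : ∀ {γ : Type u} [DecidableEq γ] (r : Finset γ), #r = m + 1 →
      #(sstarPartitions r (k + 1)) = m * f (m - 1) k + (k + 1) * f m (k + 1) :=
    fun r hr => card_sstarPartitions_succ_eq hr (fun r' _ hr' j =>
      ih #r' (by omega) r' _ (by simp) j rfl) k
  rw [hf s hm, hf t (h ▸ hm)]

theorem SStar_eq_card_sstarPartitions (n k : ℕ) :
    SStar n k = #(sstarPartitions (univ : Finset (Fin n)) k) := by
  rw [SStar, ← Set.ncard_coe_finset]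
  congr 1
  ext P
  simp

theorem SStar_succ_succ (n k : ℕ) :
    SStar (n + 1) (k + 1) = n * SStar (n - 1) k + (k + 1) * SStar n (k + 1) := by
  rw [SStar_eq_card_sstarPartitions]
  refine card_sstarPartitions_succ_eq (by simp) (fun t _ _ j => ?_) k
  rw [SStar_eq_card_sstarPartitions]
  exact card_sstarPartitions_congr t univ (by simp) j

theorem SStar_zero_right (n : ℕ) : SStar n 0 = if n = 0 then 1 else 0 := by
  simp only [SStar_eq_card_sstarPartitions, card_sstarPartitions_zero, ← card_eq_zero,
    card_univ, Fintype.card_fin]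

theorem SStar_eq_zero_of_lt {n k : ℕ} (h : n < 2 * k) : SStar n k = 0 := by
  rw [SStar_eq_card_sstarPartitions, sstarPartitions_eq_empty_of_card_lt (by simpa using h),
    card_empty]

theorem coeff_SPoly (n m : ℕ) : (SPoly n).coeff m = SStar n m := by
  rw [SPoly, finsetSum_coeff]
  simp only [coeff_C_mul, coeff_X_pow, mul_ite, mul_one, mul_zero, sum_ite_eq,
    mem_range]
  split_ifs with hm
  · rfl
  · rw [SStar_eq_zero_of_lt (by omega), Nat.cast_zero]

theorem SPoly_zero : SPoly 0 = 1 := by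
  simp [SPoly, SStar_zero_right]

theorem SPoly_succ (n : ℕ) :
    SPoly (n + 1) = C (n : ℝ) * X * SPoly (n - 1) + X * derivative (SPoly n) := by
  ext (_ | k)
  · simp [coeff_SPoly, SStar_zero_right]
  · rw [coeff_add, mul_assoc, coeff_C_mul, coeff_X_mul, coeff_X_mul, coeff_derivative,
      coeff_SPoly, coeff_SPoly, coeff_SPoly, SStar_succ_succ]
    push_cast
    ring

/-- `S_1(x) = 0`, `S_2(x) = x`, and for `n ≥ 3`,
`S_n(x) = (n−1)·x·S_{n−2}(x) + x·S'_{n−1}(x)`. -/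
theorem sPoly_recurrence :
    SPoly 1 = 0 ∧ SPoly 2 = Polynomial.X ∧
    ∀ n : ℕ, 3 ≤ n →
      SPoly n = Polynomial.C ((n : ℝ) - 1) * Polynomial.X * SPoly (n - 2) +
        Polynomial.X * Polynomial.derivative (SPoly (n - 1)) := by
  have h1 : SPoly 1 = 0 := by simp [SPoly_succ 0, SPoly_zero]
  refine ⟨h1, by simp [SPoly_succ 1, SPoly_zero, h1], fun n hn => ?_⟩
  obtain ⟨m, rfl⟩ := Nat.exists_eq_add_of_le' (by omega : 1 ≤ n)
  simpa using SPoly_succ m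
end

section
/- For every n ≥ 2, all roots of the polynomial S_n(x) = Σ_k S*(n,k) x^k are real and nonpositive, and each root has multiplicity one. -/
open Finset Polynomial

/-!
Classify the partitions of `s ∪ {e}` into blocks of size `≥ 2` by the block `B ∋ e`; those
with a given `B` correspond to the partitions of the rest. For `B = {e, j}` this gives
`(n+1) S*(n, k)`. For `|B| ≥ 3`, the partitions of the rest correspond in turn to the
partitions of `s` having `B \ {e}` as a block, and summing over `B` counts every partition of
`s` once per block, giving `(k+1) S*(n+1, k+1)`. Hence `S_{n+2} = x ((n+1) S_n + S_{n+1}')`.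

By induction, `S_{n+1}` has simple roots `0 = β₀ > β₁ > ⋯` and `(-1)^j S_n(β_j) ≥ 0`. Then
`(-1)^j S_{n+1}'(β_j) > 0`, so `S_{n+2}` alternates in sign along a point just left of `0`,
the points `β₁, β₂, …` and, when its degree exceeds that of `S_{n+1}`, a point far to the
left. The intermediate value theorem gives a root between consecutive sample points, hence
all roots, and they interlace with the `β_j`: the sign condition for `(S_{n+1}, S_{n+2})`.
-/

open scoped Topology

def assocStirling : ℕ → ℕ → ℕ
  | 0, 0 => 1
  | 0, _ + 1 => 0
  | 1, _ => 0
  | _ + 2, 0 => 0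
  | n + 2, k + 1 => (n + 1) * assocStirling n k + (k + 1) * assocStirling (n + 1) (k + 1)

theorem assocStirling_succ_succ (m k : ℕ) :
    assocStirling (m + 1) (k + 1) =
      m * assocStirling (m - 1) k + (k + 1) * assocStirling m (k + 1) := by
  rcases m with _ | m <;> simp [assocStirling]

theorem assocStirling_zero_right (n : ℕ) : assocStirling n 0 = if n = 0 then 1 else 0 := by
  rcases n with _ | _ | n <;> rfl

theorem assocStirling_eq_zero_of_lt : ∀ {n k : ℕ}, n < 2 * k → assocStirling n k = 0
  | 0, 0, h => by omega
  | 0, _ + 1, _ => rfl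
  | 1, _, _ => rfl
  | _ + 2, 0, _ => rfl
  | n + 2, k + 1, h => by
    rw [assocStirling, assocStirling_eq_zero_of_lt (n := n) (k := k) (by omega),
      assocStirling_eq_zero_of_lt (n := n + 1) (k := k + 1) (by omega), mul_zero, mul_zero,
      add_zero]

theorem assocStirling_half_pos : ∀ {n : ℕ}, n ≠ 1 → 0 < assocStirling n (n / 2)
  | 0, _ => Nat.one_pos
  | 1, h => absurd rfl h
  | n + 2, _ => by
    rw [show (n + 2) / 2 = n / 2 + 1 by omega, assocStirling]
    rcases eq_or_ne n 1 with rfl | hn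
    · decide
    · have := assocStirling_half_pos hn
      positivity

section NonsingletonPartition

variable {α : Type*} [DecidableEq α]

structure IsNonsingletonPartition (s : Finset α) (k : ℕ) (A : Finset (Finset α)) : Prop where
  card_eq : #A = k
  two_le_card : ∀ B ∈ A, 2 ≤ #B
  sup_eq : A.sup id = s
  pairwiseDisjoint : (A : Set (Finset α)).PairwiseDisjoint id

namespace IsNonsingletonPartition

variable {s B : Finset α} {k : ℕ} {A : Finset (Finset α)}

theorem subset (h : IsNonsingletonPartition s k A) (hB : B ∈ A) : B ⊆ s :=
  h.sup_eq ▸ le_sup (f := id) hB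

theorem existsUnique_mem (h : IsNonsingletonPartition s k A) {e : α} (he : e ∈ s) :
    ∃! B, B ∈ A ∧ e ∈ B := by
  obtain ⟨B, hB, heB⟩ := mem_sup.1 (h.sup_eq ▸ he : e ∈ A.sup id)
  refine ⟨B, ⟨hB, heB⟩, fun C ⟨hC, heC⟩ => ?_⟩
  by_contra hCB
  exact disjoint_left.1 (h.pairwiseDisjoint hC hB hCB) heC heB

theorem sup_erase (h : IsNonsingletonPartition s k A) (hB : B ∈ A) :
    (A.erase B).sup id = s \ B := by
  ext x
  simp only [mem_sup, mem_erase, id, mem_sdiff, ← h.sup_eq]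
  constructor
  · rintro ⟨C, ⟨hCB, hC⟩, hxC⟩
    exact ⟨⟨C, hC, hxC⟩, fun hxB => disjoint_left.1 (h.pairwiseDisjoint hC hB hCB) hxC hxB⟩
  · rintro ⟨⟨C, hC, hxC⟩, hxB⟩
    exact ⟨C, ⟨fun hCB => hxB (hCB ▸ hxC), hC⟩, hxC⟩

theorem erase (h : IsNonsingletonPartition s (k + 1) A) (hB : B ∈ A) :
    IsNonsingletonPartition (s \ B) k (A.erase B) where
  card_eq := by rw [card_erase_of_mem hB, h.card_eq, Nat.add_sub_cancel]
  two_le_card C hC := h.two_le_card C (mem_of_mem_erase hC)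
  sup_eq := h.sup_erase hB
  pairwiseDisjoint := h.pairwiseDisjoint.subset (by simp)

theorem notMem_of_nonempty (h : IsNonsingletonPartition (s \ B) k A) (hB : B.Nonempty) :
    B ∉ A := by
  intro hBA
  obtain ⟨x, hx⟩ := hB
  exact (mem_sdiff.1 (h.subset hBA hx)).2 hx

theorem insert (h : IsNonsingletonPartition (s \ B) k A) (hBs : B ⊆ s) (hB : 2 ≤ #B) :
    IsNonsingletonPartition s (k + 1) (insert B A) where
  card_eq := by
    rw [card_insert_of_notMem (h.notMem_of_nonempty (card_pos.1 (by omega))), h.card_eq]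
  two_le_card C hC := (mem_insert.1 hC).elim (· ▸ hB) (h.two_le_card C)
  sup_eq := by rw [sup_insert, h.sup_eq, id, sup_eq_union, union_sdiff_of_subset hBs]
  pairwiseDisjoint := by
    rw [coe_insert]
    refine h.pairwiseDisjoint.insert fun C hC _ => ?_
    exact disjoint_left.2 fun x hxB hxC => (mem_sdiff.1 (h.subset hC hxC)).2 hxB

end IsNonsingletonPartition

open scoped Classical in
noncomputable def nonsingletonPartitions (s : Finset α) (k : ℕ) : Finset (Finset (Finset α)) :=
  {A ∈ s.powerset.powerset | IsNonsingletonPartition s k A}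

theorem mem_nonsingletonPartitions {s : Finset α} {k : ℕ} {A : Finset (Finset α)} :
    A ∈ nonsingletonPartitions s k ↔ IsNonsingletonPartition s k A := by
  classical
  simp only [nonsingletonPartitions, mem_filter, mem_powerset, and_iff_right_iff_imp]
  exact fun h B hB => mem_powerset.2 (h.subset hB)

theorem card_filter_mem_nonsingletonPartitions {s B : Finset α} (hBs : B ⊆ s) (hB : 2 ≤ #B)
    (k : ℕ) :
    #{A ∈ nonsingletonPartitions s (k + 1) | B ∈ A} = #(nonsingletonPartitions (s \ B) k) := by
  have hBne : B.Nonempty := card_pos.1 (by omega)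
  refine card_nbij' (·.erase B) (insert B) (fun A hA => ?_) (fun A hA => ?_) (fun A hA => ?_)
    (fun A hA => ?_)
  · obtain ⟨hA, hBA⟩ := mem_filter.1 hA
    exact mem_nonsingletonPartitions.2 ((mem_nonsingletonPartitions.1 hA).erase hBA)
  · exact mem_filter.2 ⟨mem_nonsingletonPartitions.2
      ((mem_nonsingletonPartitions.1 hA).insert hBs hB), mem_insert_self B A⟩
  · exact insert_erase (mem_filter.1 hA).2
  · exact erase_insert ((mem_nonsingletonPartitions.1 hA).notMem_of_nonempty hBne)

theorem card_nonsingletonPartitions_insert_eq_sum {s : Finset α} {e : α} (he : e ∉ s)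
    (k : ℕ) :
    #(nonsingletonPartitions (insert e s) (k + 1)) =
      ∑ b ∈ s.powerset with b.Nonempty, #(nonsingletonPartitions (s \ b) k) := by
  set T := nonsingletonPartitions (insert e s) (k + 1)
  set P := {b ∈ s.powerset | b.Nonempty}
  have hblock : ∀ A ∈ T, #{b ∈ P | insert e b ∈ A} = 1 := by
    intro A hA
    obtain ⟨B, ⟨hBA, heB⟩, huniq⟩ :=
      (mem_nonsingletonPartitions.1 hA).existsUnique_mem (mem_insert_self e s)
    rw [card_eq_one]
    refine ⟨B.erase e, ext fun b => ?_⟩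
    simp only [P, mem_filter, mem_powerset, mem_singleton]
    constructor
    · rintro ⟨⟨hbs, -⟩, hbA⟩
      rw [← huniq _ ⟨hbA, mem_insert_self e b⟩, erase_insert fun heb => he (hbs heb)]
    · rintro rfl
      have hBs := (mem_nonsingletonPartitions.1 hA).subset hBA
      have hB := (mem_nonsingletonPartitions.1 hA).two_le_card B hBA
      refine ⟨⟨fun x hx => ?_, card_pos.1 (by rw [card_erase_of_mem heB]; omega)⟩, ?_⟩
      · exact (mem_insert.1 (hBs (mem_of_mem_erase hx))).resolve_left (ne_of_mem_erase hx)
      · rwa [insert_erase heB]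
  calc #T = ∑ A ∈ T, #{b ∈ P | insert e b ∈ A} := by
        rw [sum_congr rfl hblock, card_eq_sum_ones]
    _ = ∑ b ∈ P, #{A ∈ T | insert e b ∈ A} :=
        sum_card_bipartiteAbove_eq_sum_card_bipartiteBelow _
    _ = ∑ b ∈ P, #(nonsingletonPartitions (s \ b) k) := by
        refine sum_congr rfl fun b hb => ?_
        obtain ⟨hbs, hbne⟩ := mem_filter.1 hb
        have heb : e ∉ b := fun heb => he (mem_powerset.1 hbs heb)
        rw [card_filter_mem_nonsingletonPartitions (insert_subset_insert e (mem_powerset.1 hbs))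
          (by rw [card_insert_of_notMem heb]; have := hbne.card_pos; omega),
          insert_sdiff_insert, sdiff_insert_of_notMem he]

theorem sum_card_nonsingletonPartitions_sdiff_of_two_le (s : Finset α) (k : ℕ) :
    ∑ b ∈ s.powerset with 2 ≤ #b, #(nonsingletonPartitions (s \ b) k) =
      (k + 1) * #(nonsingletonPartitions s (k + 1)) := by
  set T := nonsingletonPartitions s (k + 1)
  set P := {b ∈ s.powerset | 2 ≤ #b}
  calc ∑ b ∈ P, #(nonsingletonPartitions (s \ b) k) = ∑ b ∈ P, #{A ∈ T | b ∈ A} := by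
        refine sum_congr rfl fun b hb => ?_
        obtain ⟨hbs, hb⟩ := mem_filter.1 hb
        rw [card_filter_mem_nonsingletonPartitions (mem_powerset.1 hbs) hb]
    _ = ∑ A ∈ T, #{b ∈ P | b ∈ A} :=
        (sum_card_bipartiteAbove_eq_sum_card_bipartiteBelow _).symm
    _ = ∑ A ∈ T, (k + 1) := by
        refine sum_congr rfl fun A hA => ?_
        have hA := mem_nonsingletonPartitions.1 hA
        rw [filter_mem_eq_inter, inter_eq_right.2 fun B hB => ?_, hA.card_eq]
        exact mem_filter.2 ⟨mem_powerset.2 (hA.subset hB), hA.two_le_card B hB⟩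
    _ = (k + 1) * #T := by rw [sum_const, smul_eq_mul, mul_comm]

theorem card_nonsingletonPartitions_insert {s : Finset α} {e : α} (he : e ∉ s) (k : ℕ) :
    #(nonsingletonPartitions (insert e s) (k + 1)) =
      ∑ j ∈ s, #(nonsingletonPartitions (s.erase j) k) +
        (k + 1) * #(nonsingletonPartitions s (k + 1)) := by
  rw [card_nonsingletonPartitions_insert_eq_sum he,
    ← sum_card_nonsingletonPartitions_sdiff_of_two_le,
    ← sum_filter_add_sum_filter_not _ (fun b => #b = 1), filter_filter, filter_filter]
  congr 1
  · rw [filter_congr fun b _ => and_iff_right_of_imp fun hb => card_pos.1 (by omega),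
      ← powersetCard_eq_filter, powersetCard_one, sum_map]
    simp only [Function.Embedding.coeFn_mk, sdiff_singleton_eq_erase]
  · refine sum_congr (filter_congr fun b _ => ?_) fun _ _ => rfl
    rw [← card_pos]
    omega

theorem card_nonsingletonPartitions_zero (s : Finset α) :
    #(nonsingletonPartitions s 0) = if s = ∅ then 1 else 0 := by
  have : ∀ A, IsNonsingletonPartition s 0 A ↔ A = ∅ ∧ s = ∅ := fun A =>
    ⟨fun h => ⟨card_eq_zero.1 h.card_eq, by simp [← h.sup_eq, card_eq_zero.1 h.card_eq]⟩,
      fun ⟨hA, hs⟩ => ⟨by simp [hA], by simp [hA], by simp [hA, hs], by simp [hA]⟩⟩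
  split_ifs with hs
  · exact card_eq_one.2 ⟨∅, ext fun A => by
      rw [mem_nonsingletonPartitions, this, mem_singleton, and_iff_left hs]⟩
  · exact card_eq_zero.2 (eq_empty_of_forall_notMem fun A hA =>
      hs (((this A).1 (mem_nonsingletonPartitions.1 hA)).2))

theorem nonsingletonPartitions_empty_succ (k : ℕ) :
    nonsingletonPartitions (∅ : Finset α) (k + 1) = ∅ := by
  refine eq_empty_of_forall_notMem fun A hA => ?_
  have hA := mem_nonsingletonPartitions.1 hA
  obtain ⟨B, hB⟩ := card_pos.1 (by rw [hA.card_eq]; exact k.succ_pos)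
  have := hA.two_le_card B hB
  rw [subset_empty.1 (hA.subset hB), card_empty] at this
  omega

theorem card_nonsingletonPartitions (s : Finset α) (k : ℕ) :
    #(nonsingletonPartitions s k) = assocStirling #s k := by
  induction s using Finset.strongInduction generalizing k with
  | H s ih =>
  rcases k with _ | k
  · simp only [card_nonsingletonPartitions_zero, assocStirling_zero_right, card_eq_zero]
  rcases s.eq_empty_or_nonempty with rfl | ⟨e, he⟩
  · rw [nonsingletonPartitions_empty_succ]
    rfl
  obtain ⟨t, het, rfl⟩ : ∃ t, e ∉ t ∧ s = insert e t :=
    ⟨s.erase e, notMem_erase e s, (insert_erase he).symm⟩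
  have hlt : t ⊂ insert e t := ssubset_insert het
  rw [card_nonsingletonPartitions_insert het, card_insert_of_notMem het, assocStirling_succ_succ,
    ih t hlt, sum_congr rfl fun j hj => by
      rw [ih _ ((erase_ssubset hj).trans hlt) k, card_erase_of_mem hj], sum_const, smul_eq_mul]

end NonsingletonPartition

theorem sStar_eq_card_nonsingletonPartitions (n k : ℕ) :
    SStar n k = #(nonsingletonPartitions (univ : Finset (Fin n)) k) := by
  rw [SStar, ← Nat.card_coe_set_eq, ← Nat.card_eq_finsetCard]
  refine Nat.card_congr
    { toFun P := ⟨P.1.parts, mem_nonsingletonPartitions.2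
        ⟨P.2.1, P.2.2, P.1.sup_parts, P.1.supIndep.pairwiseDisjoint⟩⟩
      invFun A :=
        have hA := mem_nonsingletonPartitions.1 A.2
        ⟨⟨A.1, hA.pairwiseDisjoint.supIndep, hA.sup_eq,
          fun h => by simpa using hA.two_le_card ⊥ h⟩, hA.card_eq, hA.two_le_card⟩
      left_inv _ := rfl
      right_inv _ := rfl }

theorem sStar_eq_assocStirling (n k : ℕ) : SStar n k = assocStirling n k := by
  rw [sStar_eq_card_nonsingletonPartitions, card_nonsingletonPartitions, card_univ,
    Fintype.card_fin]

theorem coeff_sPoly (n k : ℕ) : (SPoly n).coeff k = assocStirling n k := by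
  simp only [SPoly, sStar_eq_assocStirling, finsetSum_coeff, coeff_C_mul_X_pow, sum_ite_eq,
    mem_range]
  split_ifs with h
  · rfl
  · rw [assocStirling_eq_zero_of_lt (by omega), Nat.cast_zero]

theorem sPoly_one : SPoly 1 = 0 := by
  ext k
  rw [coeff_sPoly, coeff_zero, Nat.cast_eq_zero]
  cases k <;> rfl

theorem sPoly_two : SPoly 2 = X := by
  ext k
  rw [coeff_sPoly, coeff_X]
  rcases k with _ | _ | k <;> simp [assocStirling]

theorem sPoly_add_two (n : ℕ) :
    SPoly (n + 2) = X * (C ((n : ℝ) + 1) * SPoly n + derivative (SPoly (n + 1))) := by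
  ext (_ | k)
  · rw [coeff_X_mul_zero, coeff_sPoly, Nat.cast_eq_zero]
    rfl
  · rw [coeff_X_mul, coeff_add, coeff_C_mul, coeff_derivative, coeff_sPoly, coeff_sPoly,
      coeff_sPoly, assocStirling]
    push_cast
    ring

theorem natDegree_sPoly {n : ℕ} (hn : n ≠ 1) : (SPoly n).natDegree = n / 2 := by
  refine natDegree_eq_of_le_of_coeff_ne_zero ((natDegree_le_iff_coeff_eq_zero).2 fun k hk => ?_) ?_
  · rw [coeff_sPoly, assocStirling_eq_zero_of_lt (by omega), Nat.cast_zero]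
  · rw [coeff_sPoly]
    exact_mod_cast (assocStirling_half_pos hn).ne'

theorem leadingCoeff_sPoly_pos {n : ℕ} (hn : n ≠ 1) : 0 < (SPoly n).leadingCoeff := by
  rw [leadingCoeff, natDegree_sPoly hn, coeff_sPoly]
  exact_mod_cast assocStirling_half_pos hn

theorem neg_one_pow_mul_prod_sub_pos {R : Type*} [CommRing R] [LinearOrder R]
    [IsStrictOrderedRing R] {s : Finset ℕ} {β : ℕ → R} {y : R} {j : ℕ} (hj : range j ⊆ s)
    (hlt : ∀ i < j, y < β i) (hgt : ∀ i ∈ s, j ≤ i → β i < y) :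
    0 < (-1) ^ j * ∏ i ∈ s, (y - β i) := by
  have hneg : 0 < (-1) ^ j * ∏ i ∈ range j, (y - β i) := by
    nth_rw 1 [← card_range j]
    rw [← prod_neg]
    exact prod_pos fun i hi => neg_pos.2 (sub_neg.2 (hlt i (mem_range.1 hi)))
  have hpos : 0 < ∏ i ∈ s \ range j, (y - β i) := prod_pos fun i hi => by
    obtain ⟨his, hij⟩ := mem_sdiff.1 hi
    exact sub_pos.2 (hgt i his (not_lt.1 (mem_range.not.1 hij)))
  rw [← prod_sdiff hj, mul_left_comm]
  exact mul_pos hpos hneg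

theorem mul_neg_of_neg_one_pow_mul_pos {R : Type*} [CommRing R] [LinearOrder R]
    [IsStrictOrderedRing R] {a b : R} {j : ℕ} (ha : 0 < (-1) ^ (j + 1) * a)
    (hb : 0 < (-1) ^ (j + 2) * b) : a * b < 0 := by
  have h := mul_pos ha hb
  rw [mul_mul_mul_comm, ← pow_add, show j + 1 + (j + 2) = 2 * (j + 1) + 1 by ring, pow_succ,
    pow_mul, neg_one_sq, one_pow, one_mul, neg_one_mul] at h
  exact neg_pos.1 h

theorem strictAntiOn_Iio_of_succ_lt {α : Type*} [Preorder α] {f : ℕ → α} {n : ℕ}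
    (h : ∀ j, j + 1 < n → f (j + 1) < f j) : StrictAntiOn f (Set.Iio n) := by
  rcases n with _ | n
  · simp [Set.Iio, StrictAntiOn]
  · rw [← Order.succ_eq_add_one, Order.Iio_succ]
    exact strictAntiOn_Iic_of_succ_lt fun j hj => h j (by omega)

theorem exists_isRoot_mem_Ioo (p : ℝ[X]) {a b : ℝ} (hab : a < b) (h : p.eval a * p.eval b < 0) :
    ∃ y ∈ Set.Ioo a b, p.IsRoot y := by
  have hcont := p.continuous.continuousOn (s := Set.Icc a b)
  rcases mul_neg_iff.1 h with ⟨ha, hb⟩ | ⟨ha, hb⟩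
  · exact intermediate_value_Ioo' hab.le hcont ⟨hb, ha⟩
  · exact intermediate_value_Ioo hab.le hcont ⟨ha, hb⟩

theorem exists_lt_neg_one_pow_mul_eval_pos {p : ℝ[X]} (hp : 0 < p.natDegree)
    (hlc : 0 < p.leadingCoeff) (a : ℝ) : ∃ x < a, 0 < (-1) ^ p.natDegree * p.eval x := by
  set g := C ((-1) ^ p.natDegree) * p.comp (-X)
  have hg : g.natDegree = p.natDegree := by
    rw [natDegree_C_mul (by simp), natDegree_comp, natDegree_neg, natDegree_X, mul_one]
  have hglc : g.leadingCoeff = p.leadingCoeff := by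
    rw [leadingCoeff_C_mul_of_isUnit (by simp), leadingCoeff_comp (by simp), leadingCoeff_neg,
      leadingCoeff_X, mul_left_comm, ← mul_pow, neg_one_mul, neg_neg, one_pow, mul_one]
  obtain ⟨y, hy, hya⟩ := ((tendsto_atTop_of_leadingCoeff_nonneg g
    (natDegree_pos_iff_degree_pos.1 (hg ▸ hp)) (hglc ▸ hlc.le)).eventually_gt_atTop 0 |>.and
    (Filter.eventually_gt_atTop (-a))).exists
  refine ⟨-y, by linarith, ?_⟩
  simpa [g] using hy

theorem exists_neg_forall_lt_and_eval_pos {u : ℝ[X]} (hu : 0 < u.eval 0) {ι : Type*}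
    (s : Finset ι) {f : ι → ℝ} (hs : ∀ i ∈ s, f i < 0) :
    ∃ t < 0, (∀ i ∈ s, f i < t) ∧ 0 < u.eval t := by
  have hneg : ∀ᶠ t in 𝓝[<] (0 : ℝ), t < 0 := self_mem_nhdsWithin
  have hgt : ∀ᶠ t in 𝓝[<] (0 : ℝ), ∀ i ∈ s, f i < t :=
    (Filter.eventually_all_finset s).2 fun i hi => nhdsWithin_le_nhds (lt_mem_nhds (hs i hi))
  have hpos : ∀ᶠ t in 𝓝[<] (0 : ℝ), 0 < u.eval t :=
    nhdsWithin_le_nhds ((u.continuous.tendsto 0).eventually (lt_mem_nhds hu))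
  obtain ⟨t, ht, hts, hut⟩ := (hneg.and (hgt.and hpos)).exists
  exact ⟨t, ht, hts, hut⟩

/-- `0 = β 0 > β 1 > ⋯ > β (d - 1)` are `d = q.natDegree` distinct roots of `q`, hence all of
them, each simple. -/
structure IsSimpleRootSeq (q : ℝ[X]) (β : ℕ → ℝ) : Prop where
  leadingCoeff_pos : 0 < q.leadingCoeff
  natDegree_pos : 0 < q.natDegree
  zero : β 0 = 0
  strictAntiOn : StrictAntiOn β (Set.Iio q.natDegree)
  isRoot : ∀ j < q.natDegree, q.IsRoot (β j)

namespace IsSimpleRootSeq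

variable {q : ℝ[X]} {β : ℕ → ℝ}

theorem ne_zero (hq : IsSimpleRootSeq q β) : q ≠ 0 :=
  leadingCoeff_ne_zero.1 hq.leadingCoeff_pos.ne'

theorem injOn (hq : IsSimpleRootSeq q β) : Set.InjOn β (range q.natDegree) :=
  hq.strictAntiOn.injOn.mono fun _ hj => mem_range.1 hj

theorem roots_eq (hq : IsSimpleRootSeq q β) :
    q.roots = ((range q.natDegree).image β).val := by
  refine (Multiset.eq_of_le_of_card_le
    ((Multiset.le_iff_subset (nodup _)).2 fun x hx => ?_) ?_).symm
  · rw [mem_val, mem_image] at hx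
    obtain ⟨j, hj, rfl⟩ := hx
    exact (mem_roots hq.ne_zero).2 (hq.isRoot j (mem_range.1 hj))
  · rw [card_val, card_image_of_injOn hq.injOn, card_range]
    exact card_roots' q

theorem card_roots (hq : IsSimpleRootSeq q β) : Multiset.card q.roots = q.natDegree := by
  rw [hq.roots_eq, card_val, card_image_of_injOn hq.injOn, card_range]

theorem nonpos_of_mem_roots (hq : IsSimpleRootSeq q β) {x : ℝ} (hx : x ∈ q.roots) :
    x ≤ 0 := by
  rw [hq.roots_eq, mem_val, mem_image] at hx
  obtain ⟨j, hj, rfl⟩ := hx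
  exact hq.zero ▸ hq.strictAntiOn.antitoneOn hq.natDegree_pos (mem_range.1 hj) (Nat.zero_le j)

theorem rootMultiplicity_eq_one (hq : IsSimpleRootSeq q β) {x : ℝ} (hx : q.IsRoot x) :
    rootMultiplicity x q = 1 := by
  rw [← count_roots]
  exact Multiset.count_eq_one_of_mem (hq.roots_eq ▸ nodup _) ((mem_roots hq.ne_zero).2 hx)

theorem eq_C_mul_prod (hq : IsSimpleRootSeq q β) :
    q = C q.leadingCoeff * ∏ j ∈ range q.natDegree, (X - C (β j)) := by
  conv_lhs => rw [← C_leadingCoeff_mul_prod_multiset_X_sub_C hq.card_roots, hq.roots_eq]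
  rw [← prod_eq_multiset_prod, prod_image hq.injOn]

theorem neg_one_pow_mul_eval_pos (hq : IsSimpleRootSeq q β) {y : ℝ} {j : ℕ}
    (hj : j ≤ q.natDegree) (hlt : ∀ i < j, y < β i)
    (hgt : ∀ i, j ≤ i → i < q.natDegree → β i < y) : 0 < (-1) ^ j * q.eval y := by
  rw [hq.eq_C_mul_prod, eval_mul, eval_C, eval_prod, mul_left_comm]
  simp only [eval_sub, eval_X, eval_C]
  exact mul_pos hq.leadingCoeff_pos (neg_one_pow_mul_prod_sub_pos (range_subset_range.2 hj) hlt
    fun i hi hji => hgt i hji (mem_range.1 hi))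

theorem neg_one_pow_mul_eval_derivative_pos (hq : IsSimpleRootSeq q β) {j : ℕ}
    (hj : j < q.natDegree) : 0 < (-1) ^ j * (derivative q).eval (β j) := by
  have hprod := mul_prod_erase (range q.natDegree) (fun i => X - C (β i)) (mem_range.2 hj)
  rw [hq.eq_C_mul_prod, derivative_C_mul, ← hprod, derivative_mul, eval_mul, eval_C, eval_add,
    eval_mul, eval_mul, eval_sub, eval_X, eval_C, sub_self, zero_mul, add_zero, derivative_sub,
    derivative_X, derivative_C, sub_zero, eval_one, one_mul, eval_prod, mul_left_comm]
  simp only [eval_sub, eval_X, eval_C]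
  refine mul_pos hq.leadingCoeff_pos (neg_one_pow_mul_prod_sub_pos (fun i hi => ?_)
    (fun i hi => ?_) fun i hi hji => ?_)
  · exact mem_erase.2 ⟨(mem_range.1 hi).ne, mem_range.2 ((mem_range.1 hi).trans hj)⟩
  · exact hq.strictAntiOn (hi.trans hj) hj hi
  · obtain ⟨hij, hi⟩ := mem_erase.1 hi
    exact hq.strictAntiOn hj (mem_range.1 hi) (lt_of_le_of_ne hji hij.symm)

/-- Sample points along which `r = X * u` alternates in sign: a point `x 0` just left of `0`,
the negative roots `β 1, β 2, …` of `q`, and, if `r` has one more root than `q`, a point far to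
the left. -/
theorem exists_sign_changes_X_mul (hq : IsSimpleRootSeq q β) {u r : ℝ[X]}
    (hu : ∀ j < q.natDegree, 0 < (-1) ^ j * u.eval (β j)) (hr : r = X * u)
    (hlc : 0 < r.leadingCoeff) (hdeg : q.natDegree ≤ r.natDegree)
    (hdeg' : r.natDegree ≤ q.natDegree + 1) :
    ∃ x : ℕ → ℝ, x 0 < 0 ∧ (∀ j, j + 1 < r.natDegree → x (j + 1) < x j) ∧
      (∀ j < r.natDegree, 0 < (-1) ^ (j + 1) * r.eval (x j)) ∧
      ∀ j, 1 ≤ j → j < q.natDegree → x j = β j := by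
  set b := q.natDegree
  have hb := hq.natDegree_pos
  have hβneg : ∀ j, 1 ≤ j → j < b → β j < 0 := fun j h1 hj =>
    hq.zero ▸ hq.strictAntiOn hb hj h1
  have hr_eval : ∀ y, r.eval y = y * u.eval y := fun y => by rw [hr, eval_mul, eval_X]
  obtain ⟨t₀, ht₀, hβt₀, hut₀⟩ := exists_neg_forall_lt_and_eval_pos
    (by simpa [hq.zero] using hu 0 hb) (Ico 1 b) fun j hj =>
      hβneg j (mem_Ico.1 hj).1 (mem_Ico.1 hj).2
  obtain ⟨far, hfar, hfar_sign⟩ := exists_lt_neg_one_pow_mul_eval_pos (hb.trans_le hdeg) hlc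
    (min t₀ (β (b - 1)))
  set x : ℕ → ℝ := fun j => if j = 0 then t₀ else if j < b then β j else far
  have hxβ : ∀ j, 1 ≤ j → j < b → x j = β j := fun j h1 hj => by
    simp only [x, if_neg (by omega : j ≠ 0), if_pos hj]
  refine ⟨x, by simpa [x] using ht₀, fun j hj => ?_, fun j hj => ?_, hxβ⟩
  · by_cases hjb : j + 1 < b
    · rw [hxβ _ (by omega) hjb]
      rcases j with _ | j
      · simpa [x] using hβt₀ 1 (mem_Ico.2 ⟨le_rfl, hjb⟩)
      · rw [hxβ _ (by omega) (by omega)]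
        exact hq.strictAntiOn (show j + 1 < b by omega) hjb (Nat.lt_succ_self _)
    · rw [show x (j + 1) = far by simp [x, hjb]]
      rcases j with _ | j
      · simpa [x] using hfar.trans_le (min_le_left _ _)
      · rw [hxβ _ (by omega) (by omega)]
        exact hfar.trans_le ((min_le_right _ _).trans_eq (congrArg β (by omega)))
  · rcases j with _ | j
    · simp only [x, if_pos rfl, hr_eval, zero_add, pow_one]
      nlinarith
    by_cases hjb : j + 1 < b
    · rw [hxβ _ (by omega) hjb, hr_eval, pow_succ]
      have := hu _ hjb
      have := hβneg _ (by omega) hjb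
      nlinarith
    · have hjd : j + 1 + 1 = r.natDegree := by omega
      simpa [x, hjb, hjd] using hfar_sign

end IsSimpleRootSeq

theorem exists_isSimpleRootSeq_of_sign_changes {r : ℝ[X]} (hlc : 0 < r.leadingCoeff)
    (hdeg : 0 < r.natDegree) (hr0 : r.IsRoot 0) {x : ℕ → ℝ} (hx0 : x 0 < 0)
    (hx : ∀ j, j + 1 < r.natDegree → x (j + 1) < x j)
    (hsign : ∀ j < r.natDegree, 0 < (-1) ^ (j + 1) * r.eval (x j)) :
    ∃ γ, IsSimpleRootSeq r γ ∧
      ∀ j, j + 1 < r.natDegree → γ (j + 1) ∈ Set.Ioo (x (j + 1)) (x j) := by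
  have hroot : ∀ j, j + 1 < r.natDegree → ∃ y ∈ Set.Ioo (x (j + 1)) (x j), r.IsRoot y :=
    fun j hj => exists_isRoot_mem_Ioo r (hx j hj) (by
      rw [mul_comm]
      exact mul_neg_of_neg_one_pow_mul_pos (hsign j (by omega)) (hsign (j + 1) hj))
  choose! y hy hyr using hroot
  refine ⟨fun | 0 => 0 | j + 1 => y j,
    ⟨hlc, hdeg, rfl, strictAntiOn_Iio_of_succ_lt ?_, ?_⟩, hy⟩
  · rintro (_ | j) hj
    · exact (hy 0 hj).2.trans hx0
    · exact (hy (j + 1) hj).2.trans (hy j (by omega)).1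
  · rintro (_ | j) hj
    · exact hr0
    · exact hyr j hj

/-- `p` weakly alternates in sign along the roots `0 = β 0 > β 1 > ⋯` of `q`. For `p` with
real roots this says that they interlace with those of `q`; the weak form also covers `p = 0`. -/
def Interlaces (p q : ℝ[X]) : Prop :=
  ∃ β, IsSimpleRootSeq q β ∧ ∀ j < q.natDegree, 0 ≤ (-1) ^ j * p.eval (β j)

theorem Interlaces.step {p q r : ℝ[X]} {c : ℝ} (h : Interlaces p q) (hc : 0 ≤ c)
    (hr : r = X * (C c * p + derivative q)) (hlc : 0 < r.leadingCoeff)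
    (hdeg : q.natDegree ≤ r.natDegree) (hdeg' : r.natDegree ≤ q.natDegree + 1) :
    Interlaces q r := by
  obtain ⟨β, hq, hp⟩ := h
  set b := q.natDegree
  have hb := hq.natDegree_pos
  have hu : ∀ j < b, 0 < (-1) ^ j * (C c * p + derivative q).eval (β j) := fun j hj => by
    have := mul_nonneg hc (hp j hj)
    have := hq.neg_one_pow_mul_eval_derivative_pos hj
    simp only [eval_add, eval_mul, eval_C]
    linarith
  obtain ⟨x, hx0, hx, hsign, hxβ⟩ := hq.exists_sign_changes_X_mul hu hr hlc hdeg hdeg'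
  obtain ⟨γ, hγ, hγx⟩ := exists_isSimpleRootSeq_of_sign_changes hlc (hb.trans_le hdeg)
    (by rw [IsRoot, hr, eval_mul, eval_X, zero_mul]) hx0 hx hsign
  refine ⟨γ, hγ, fun j hj => ?_⟩
  rcases j with _ | j
  · rw [hγ.zero, (show q.IsRoot 0 from hq.zero ▸ hq.isRoot 0 hb).eq_zero, mul_zero]
  -- `γ (j + 1)` lies between `β (j + 1)` and `β j`, so exactly `β 0, …, β j` lie above it.
  refine (hq.neg_one_pow_mul_eval_pos (by omega) (fun i hi => ?_) fun i hi hib => ?_).le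
  · have hxj : x j ≤ β j := by
      rcases j with _ | j
      · exact hq.zero ▸ hx0.le
      · exact (hxβ _ (by omega) (by omega)).le
    calc γ (j + 1) < x j := (hγx j hj).2
      _ ≤ β j := hxj
      _ ≤ β i := hq.strictAntiOn.antitoneOn (show i < b by omega) (show j < b by omega)
          (by omega)
  · calc β i ≤ β (j + 1) := hq.strictAntiOn.antitoneOn (by omega : j + 1 < b) hib hi
      _ = x (j + 1) := (hxβ _ (by omega) (by omega)).symm
      _ < γ (j + 1) := (hγx j hj).1

theorem interlaces_sPoly {m : ℕ} (hm : 1 ≤ m) : Interlaces (SPoly m) (SPoly (m + 1)) := by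
  induction m, hm using Nat.le_induction with
  | base =>
    refine ⟨fun _ => 0, ?_, fun j _ => by simp [sPoly_one]⟩
    rw [sPoly_two]
    refine ⟨by simp, by simp, rfl, fun i hi j hj hij => ?_, fun j _ => by simp⟩
    simp only [natDegree_X, Set.mem_Iio] at hi hj
    omega
  | succ m hm ih =>
    refine ih.step (c := (m : ℝ) + 1) (by positivity) (sPoly_add_two m)
      (leadingCoeff_sPoly_pos (by omega)) ?_ ?_ <;>
    rw [natDegree_sPoly (by omega), natDegree_sPoly (by omega)] <;> omega

/-- For `n ≥ 2`, all roots of `S_n(x)` are real and nonpositive, and each root has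
multiplicity one. -/
theorem sPoly_roots_real_nonpos_simple (n : ℕ) (hn : 2 ≤ n) :
    (∀ z : ℂ, ((SPoly n).map (algebraMap ℝ ℂ)).IsRoot z →
      ∃ x : ℝ, x ≤ 0 ∧ (x : ℂ) = z) ∧
    (∀ x : ℝ, (SPoly n).IsRoot x → Polynomial.rootMultiplicity x (SPoly n) = 1) := by
  obtain ⟨β, hβ, -⟩ := interlaces_sPoly (m := n - 1) (by omega)
  rw [Nat.sub_add_cancel (by omega)] at hβ
  refine ⟨fun z hz => ?_, fun x hx => hβ.rootMultiplicity_eq_one hx⟩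
  rw [← mem_roots ((Polynomial.map_ne_zero_iff (algebraMap ℝ ℂ).injective).2 hβ.ne_zero),
    ← roots_map_of_injective_of_card_eq_natDegree (algebraMap ℝ ℂ).injective hβ.card_roots,
    Multiset.mem_map] at hz
  obtain ⟨x, hx, rfl⟩ := hz
  exact ⟨x, hβ.nonpos_of_mem_roots hx, rfl⟩
end

section
/- For fixed n, the sequence k ↦ S(n,k) of Stirling numbers of the second kind is strictly log-concave: S(n,k)² > S(n,k−1)·S(n,k+1) for 2 ≤ k ≤ n−1. -/
/-!
Deleting a point `a` from a partition of `s` into `k` blocks leaves a partition of `s.erase a`: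
into `k - 1` blocks if `{a}` was a block, and otherwise into `k` blocks, one of which is marked
as the block that contained `a`. Hence `S(n+1, k) = k S(n, k) + S(n, k-1)`, Mathlib's defining
recurrence of `Nat.stirlingSecond`.

Log-concavity then propagates along this recurrence by induction on `n`: if `A, B, C, D` are
consecutive values of `S(n, ·)` with `B, C > 0`, the inequalities `BD ≤ C²` and `AC ≤ B²`
(hence `AD ≤ BC`) expand to the strict inequality for the next row, with slack at least `C²`.
-/

open Finset Polynomial

namespace Finpartition

variable {α : Type*} [DecidableEq α] {s : Finset α} {a : α}

lemma sup_erase_parts (P : Finpartition s) {t : Finset α} (ht : t ∈ P.parts) :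
    (P.parts.erase t).sup id = s \ t := by
  have hdisj : Disjoint t ((P.parts.erase t).sup id) := Finset.disjoint_sup_right.mpr fun u hu =>
    P.disjoint ht (Finset.mem_of_mem_erase hu) (Finset.ne_of_mem_erase hu).symm
  have hsup := Finset.sup_insert (f := id) (b := t) (s := P.parts.erase t)
  rw [Finset.insert_erase ht, P.sup_parts] at hsup
  exact hdisj.sup_sdiff_cancel_left.symm.trans (congrArg (· \ t) hsup.symm)

lemma notMem_of_mem_parts_erase (Q : Finpartition (s.erase a)) {q : Finset α}
    (hq : q ∈ Q.parts) : a ∉ q := fun h => Finset.notMem_erase a s (Q.le hq h)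

lemma erase_nonempty_of_mem_parts {P : Finpartition s} (hP : {a} ∉ P.parts) {t : Finset α}
    (ht : t ∈ P.parts) : (t.erase a).Nonempty := by
  rw [Finset.nonempty_iff_ne_empty, Ne, Finset.erase_eq_empty_iff]
  rintro (rfl | rfl)
  exacts [P.empty_notMem_parts ht, hP ht]

def erasePoint (P : Finpartition s) (hP : {a} ∉ P.parts) : Finpartition (s.erase a) where
  parts := P.parts.image (·.erase a)
  supIndep := (P.disjoint.image_finset_of_le fun _ => Finset.erase_subset _ _).supIndep
  sup_parts := by
    rw [Finset.sup_image, ← Finset.sdiff_singleton_eq_erase]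
    conv_rhs => rw [← P.sup_parts]
    simp [← Finset.sup_sdiff_right, Finset.sdiff_singleton_eq_erase]
  bot_notMem := by
    simp only [Finset.bot_eq_empty, Finset.mem_image, not_exists, not_and]
    exact fun t ht => (erase_nonempty_of_mem_parts hP ht).ne_empty

lemma erasePoint_parts (P : Finpartition s) (hP : {a} ∉ P.parts) :
    (P.erasePoint hP).parts = P.parts.image (·.erase a) :=
  rfl

lemma card_erasePoint (P : Finpartition s) (hP : {a} ∉ P.parts) :
    #(P.erasePoint hP).parts = #P.parts := by
  refine Finset.card_image_of_injOn fun t ht u hu htu => ?_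
  by_contra hne
  obtain ⟨x, hx⟩ := erase_nonempty_of_mem_parts hP ht
  have hxu : x ∈ u.erase a := htu ▸ hx
  exact Finset.disjoint_left.mp (P.disjoint ht hu hne) (Finset.mem_of_mem_erase hx)
    (Finset.mem_of_mem_erase hxu)

def insertPoint (Q : Finpartition (s.erase a)) (ha : a ∈ s) {p : Finset α} (hp : p ∈ Q.parts) :
    Finpartition s :=
  (Q.ofSubset (Finset.erase_subset p Q.parts) rfl).extend (b := insert a p)
    (Finset.insert_ne_empty a p)
    (Finset.disjoint_sup_left.mpr fun q hq => Finset.disjoint_insert_right.mpr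
      ⟨notMem_of_mem_parts_erase Q (Finset.mem_of_mem_erase hq),
        Q.disjoint (Finset.mem_of_mem_erase hq) hp (Finset.ne_of_mem_erase hq)⟩)
    (by
      have hp_sup : p ⊔ (Q.parts.erase p).sup id = s.erase a := by
        have := Finset.sup_insert (f := id) (b := p) (s := Q.parts.erase p)
        rwa [Finset.insert_erase hp, Q.sup_parts, eq_comm] at this
      rw [Finset.sup_eq_union, Finset.union_insert, ← Finset.sup_eq_union, sup_comm, hp_sup,
        Finset.insert_erase ha])

lemma insertPoint_parts (Q : Finpartition (s.erase a)) (ha : a ∈ s) {p : Finset α}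
    (hp : p ∈ Q.parts) : (Q.insertPoint ha hp).parts = insert (insert a p) (Q.parts.erase p) :=
  rfl

lemma card_insertPoint (Q : Finpartition (s.erase a)) (ha : a ∈ s) {p : Finset α}
    (hp : p ∈ Q.parts) : #(Q.insertPoint ha hp).parts = #Q.parts := by
  rw [insertPoint, card_extend, ofSubset_parts, Finset.card_erase_add_one hp]

lemma singleton_notMem_parts_insertPoint (Q : Finpartition (s.erase a)) (ha : a ∈ s)
    {p : Finset α} (hp : p ∈ Q.parts) : {a} ∉ (Q.insertPoint ha hp).parts := by
  rw [insertPoint_parts, Finset.mem_insert, not_or]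
  refine ⟨fun h => ?_, fun h =>
    notMem_of_mem_parts_erase Q (Finset.mem_of_mem_erase h) (Finset.mem_singleton_self a)⟩
  obtain ⟨x, hx⟩ := Q.nonempty_of_mem_parts hp
  have hxa : x ∈ ({a} : Finset α) := h ▸ Finset.mem_insert_of_mem hx
  exact notMem_of_mem_parts_erase Q hp (Finset.mem_singleton.mp hxa ▸ hx)

lemma erasePoint_insertPoint (Q : Finpartition (s.erase a)) (ha : a ∈ s) {p : Finset α}
    (hp : p ∈ Q.parts) :
    (Q.insertPoint ha hp).erasePoint (singleton_notMem_parts_insertPoint Q ha hp) = Q := by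
  ext1
  have herase : ∀ q ∈ Q.parts.erase p, q.erase a = q := fun q hq =>
    Finset.erase_eq_of_notMem (notMem_of_mem_parts_erase Q (Finset.mem_of_mem_erase hq))
  rw [erasePoint_parts, insertPoint_parts, Finset.image_insert,
    Finset.erase_insert (notMem_of_mem_parts_erase Q hp), Finset.image_congr herase,
    Finset.image_id', Finset.insert_erase hp]

lemma image_erase_parts (P : Finpartition s) (ha : a ∈ s) :
    P.parts.image (·.erase a) = insert ((P.part a).erase a) (P.parts.erase (P.part a)) := by
  have herase : ∀ t ∈ P.parts.erase (P.part a), t.erase a = t := fun t ht =>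
    Finset.erase_eq_of_notMem fun hat =>
      Finset.ne_of_mem_erase ht (P.part_eq_of_mem (Finset.mem_of_mem_erase ht) hat).symm
  conv_lhs => rw [← Finset.insert_erase (P.part_mem.2 ha)]
  rw [Finset.image_insert, Finset.image_congr herase, Finset.image_id']

lemma erase_part_mem_parts_erasePoint (P : Finpartition s) (ha : a ∈ s) (hP : {a} ∉ P.parts) :
    (P.part a).erase a ∈ (P.erasePoint hP).parts :=
  Finset.mem_image_of_mem _ (P.part_mem.2 ha)

lemma insertPoint_erasePoint (P : Finpartition s) (ha : a ∈ s) (hP : {a} ∉ P.parts) :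
    (P.erasePoint hP).insertPoint ha (erase_part_mem_parts_erasePoint P ha hP) = P := by
  have hnew : (P.part a).erase a ∉ P.parts.erase (P.part a) := fun h => by
    obtain ⟨x, hx⟩ := erase_nonempty_of_mem_parts hP (P.part_mem.2 ha)
    refine Finset.ne_of_mem_erase h ?_
    rw [← P.part_eq_of_mem (Finset.mem_of_mem_erase h) hx,
      P.part_eq_of_mem (P.part_mem.2 ha) (Finset.mem_of_mem_erase hx)]
  ext1
  rw [insertPoint_parts, erasePoint_parts, image_erase_parts P ha, Finset.erase_insert hnew,
    Finset.insert_erase (P.mem_part ha), Finset.insert_erase (P.part_mem.2 ha)]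

lemma part_insertPoint (Q : Finpartition (s.erase a)) (ha : a ∈ s) {p : Finset α}
    (hp : p ∈ Q.parts) : (Q.insertPoint ha hp).part a = insert a p :=
  part_eq_of_mem _ (Finset.mem_insert_self _ _) (Finset.mem_insert_self a p)

def equivSingletonMem (ha : a ∈ s) (k : ℕ) :
    {P : Finpartition s // #P.parts = k + 1 ∧ {a} ∈ P.parts} ≃
      {Q : Finpartition (s.erase a) // #Q.parts = k} where
  toFun P := ⟨P.1.ofSubset (Finset.erase_subset _ _)
      ((sup_erase_parts P.1 P.2.2).trans (Finset.sdiff_singleton_eq_erase a s)),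
    by rw [ofSubset_parts, Finset.card_erase_of_mem P.2.2, P.2.1, Nat.add_sub_cancel]⟩
  invFun Q := ⟨Q.1.extend (b := {a}) (Finset.singleton_ne_empty a)
      (Finset.disjoint_singleton_right.mpr (Finset.notMem_erase a s))
      (by rw [Finset.sup_eq_union, Finset.union_comm, ← Finset.insert_eq,
        Finset.insert_erase ha]),
    by rw [card_extend, Q.2], Finset.mem_insert_self _ _⟩
  left_inv P := by
    ext1; ext1
    exact Finset.insert_erase P.2.2
  right_inv Q := by
    ext1; ext1
    exact Finset.erase_insert fun h =>
      Finset.notMem_erase a s (Q.1.le h (Finset.mem_singleton_self a))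

def equivSingletonNotMem (ha : a ∈ s) (k : ℕ) :
    {P : Finpartition s // #P.parts = k + 1 ∧ {a} ∉ P.parts} ≃
      Σ Q : {Q : Finpartition (s.erase a) // #Q.parts = k + 1}, Q.1.parts where
  toFun P := ⟨⟨P.1.erasePoint P.2.2, by rw [card_erasePoint, P.2.1]⟩,
    ⟨(P.1.part a).erase a, erase_part_mem_parts_erasePoint P.1 ha P.2.2⟩⟩
  invFun Q := ⟨Q.1.1.insertPoint ha Q.2.2,
    by rw [card_insertPoint, Q.1.2], singleton_notMem_parts_insertPoint _ ha _⟩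
  left_inv P := Subtype.ext (insertPoint_erasePoint P.1 ha P.2.2)
  right_inv := by
    rintro ⟨⟨Q, hQ⟩, ⟨p, hp⟩⟩
    have hQ' := erasePoint_insertPoint Q ha hp
    refine Sigma.ext (Subtype.ext hQ') ((Subtype.heq_iff_coe_eq fun _ => ?_).mpr ?_)
    · exact iff_of_eq (congrArg (_ ∈ ·.parts) hQ')
    change ((Q.insertPoint ha hp).part a).erase a = p
    rw [part_insertPoint, Finset.erase_insert (notMem_of_mem_parts_erase Q hp)]

theorem card_parts_eq_succ (ha : a ∈ s) (k : ℕ) :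
    Nat.card {P : Finpartition s // #P.parts = k + 1} =
      (k + 1) * Nat.card {Q : Finpartition (s.erase a) // #Q.parts = k + 1} +
        Nat.card {Q : Finpartition (s.erase a) // #Q.parts = k} := by
  have hsplit : Nat.card {P : Finpartition s // #P.parts = k + 1} =
      Nat.card {P : Finpartition s // #P.parts = k + 1 ∧ {a} ∈ P.parts} +
        Nat.card {P : Finpartition s // #P.parts = k + 1 ∧ {a} ∉ P.parts} := by
    simp only [Nat.card_eq_fintype_card, Fintype.card_subtype, ← Finset.filter_filter]
    exact (Finset.card_filter_add_card_filter_not _).symm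
  rw [hsplit, Nat.card_congr (equivSingletonMem ha k), Nat.card_congr (equivSingletonNotMem ha k),
    Nat.card_sigma, add_comm]
  simp only [Nat.card_eq_fintype_card, Fintype.card_coe]
  rw [Finset.sum_congr rfl fun Q _ => Q.2, Finset.sum_const, smul_eq_mul, mul_comm,
    Finset.card_univ]

theorem card_parts_eq_stirlingSecond (s : Finset α) (k : ℕ) :
    Nat.card {P : Finpartition s // #P.parts = k} = Nat.stirlingSecond #s k := by
  induction s using Finset.induction_on generalizing k with
  | empty =>
    have hparts (P : Finpartition (∅ : Finset α)) : #P.parts = 0 := by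
      rw [Finset.card_eq_zero, parts_eq_empty_iff, Finset.bot_eq_empty]
    cases k
    · simpa [hparts] using Fintype.card_unique (α := Finpartition (⊥ : Finset α))
    · simp [hparts]
  | insert a s ha ih =>
    cases k with
    | zero =>
      have hparts (P : Finpartition (insert a s)) : #P.parts ≠ 0 :=
        (Finset.card_pos.mpr (P.parts_nonempty (Finset.insert_nonempty a s).ne_empty)).ne'
      simp [hparts, Finset.card_insert_of_notMem ha]
    | succ k =>
      rw [card_parts_eq_succ (Finset.mem_insert_self a s), Finset.erase_insert ha, ih, ih,
        Finset.card_insert_of_notMem ha, Nat.stirlingSecond_succ_succ]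

end Finpartition

namespace Nat

theorem stirlingSecond_pos {n k : ℕ} (hk : k ≠ 0) (hkn : k ≤ n) : 0 < stirlingSecond n k := by
  induction n generalizing k with
  | zero => omega
  | succ n ih =>
    obtain ⟨j, rfl⟩ := exists_eq_succ_of_ne_zero hk
    rcases eq_or_ne j 0 with rfl | hj
    · rw [stirlingSecond_one_right]; exact one_pos
    · rw [stirlingSecond_succ_succ]
      have := ih hj (by omega)
      positivity

theorem add_mul_lt_sq_of_mul_le_sq {A B C D : ℕ} (m : ℕ) (hB : 0 < B) (hC : 0 < C)
    (hBD : B * D ≤ C ^ 2) (hAC : A * C ≤ B ^ 2) :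
    ((m + 1) * B + A) * ((m + 3) * D + C) < ((m + 2) * C + B) ^ 2 := by
  have hAD : A * D ≤ B * C := by
    refine Nat.le_of_mul_le_mul_right ?_ (Nat.mul_pos hB hC)
    calc A * D * (B * C) = A * C * (B * D) := by ring
      _ ≤ B ^ 2 * C ^ 2 := Nat.mul_le_mul hAC hBD
      _ = B * C * (B * C) := by ring
  have hBD' := Nat.mul_le_mul_left ((m + 1) * (m + 3)) hBD
  have hAD' := Nat.mul_le_mul_left (m + 3) hAD
  nlinarith

theorem stirlingSecond_succ_mul_lt_sq {n m : ℕ} (hm : m + 2 ≤ n)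
    (hlc : ∀ j, stirlingSecond n j * stirlingSecond n (j + 2) ≤ stirlingSecond n (j + 1) ^ 2) :
    stirlingSecond (n + 1) (m + 1) * stirlingSecond (n + 1) (m + 3) <
      stirlingSecond (n + 1) (m + 2) ^ 2 := by
  simp only [stirlingSecond_succ_succ]
  exact add_mul_lt_sq_of_mul_le_sq m (stirlingSecond_pos (by omega) (by omega))
    (stirlingSecond_pos (by omega) hm) (hlc (m + 1)) (hlc m)

theorem stirlingSecond_mul_le_sq (n k : ℕ) :
    stirlingSecond n k * stirlingSecond n (k + 2) ≤ stirlingSecond n (k + 1) ^ 2 := by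
  induction n generalizing k with
  | zero => simp [stirlingSecond_eq_zero_of_lt (show 0 < k + 2 by omega)]
  | succ n ih =>
    rcases Nat.lt_or_ge (n + 1) (k + 2) with hkn | hkn
    · simp [stirlingSecond_eq_zero_of_lt hkn]
    rcases k with _ | m
    · simp
    · exact (stirlingSecond_succ_mul_lt_sq (by omega) ih).le

theorem stirlingSecond_mul_lt_sq {n k : ℕ} (hk : k ≠ 0) (hkn : k + 2 ≤ n) :
    stirlingSecond n k * stirlingSecond n (k + 2) < stirlingSecond n (k + 1) ^ 2 := by
  obtain ⟨m, rfl⟩ := exists_eq_succ_of_ne_zero hk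
  obtain ⟨n, rfl⟩ : ∃ n', n = n' + 1 := ⟨n - 1, by omega⟩
  exact stirlingSecond_succ_mul_lt_sq (by omega) (stirlingSecond_mul_le_sq n)

end Nat

theorem stirling_eq_stirlingSecond (n k : ℕ) : Stirling n k = Nat.stirlingSecond n k := by
  rw [Stirling, ← Nat.card_coe_set_eq, Set.coe_ofPred, Finpartition.card_parts_eq_stirlingSecond,
    Finset.card_univ, Fintype.card_fin]

/-- For fixed `n`, the Stirling numbers of the second kind are strictly log-concave:
`S(n,k)² > S(n,k−1)·S(n,k+1)` for `2 ≤ k ≤ n−1`. -/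
theorem stirling_SLC (n k : ℕ) (hk : 2 ≤ k) (hkn : k ≤ n - 1) :
    Stirling n (k - 1) * Stirling n (k + 1) < (Stirling n k) ^ 2 := by
  obtain ⟨j, rfl⟩ : ∃ j, k = j + 1 := ⟨k - 1, by omega⟩
  simp only [stirling_eq_stirlingSecond, Nat.add_sub_cancel]
  exact Nat.stirlingSecond_mul_lt_sq (by omega) (by omega)
end
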